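/- arXiv:2404.02266 — 5 statements merged into one kernel-verified Lean document; each statement's English description precedes it below -/
import Mathlib

section
/- Suppose min_k(s_{k+1}−s_k) ≥ t^{γ0} and fix 0 < β < γ < γ0. Then there exist constants C1, C2 > 0, not depending on k, such that for all sufficiently large t and every 1 ≤ k ≤ M−1, P(#E_{k,γ}(t) ≥ C1·t^{γ−β}) ≥ 1 − exp(−C2·t^{γ−β}). -/
/-! The window `[s_k, s_k + t^γ]` lies in `[1, t]`, since consecutive epoch starts are at least
`t^γ0 ≥ t^γ` apart, so it holds at least `t^γ` indices `j ≤ t`, each sampled with probability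
`j^(-β) ≥ t^(-β)`: the expected count is at least `t^(γ-β)`. Chernoff's bound at `θ = -1`, with
`E[e^(-Z_j)] = 1 - (1 - e⁻¹) p_j ≤ exp (-(1 - e⁻¹) p_j)`, then gives
`P(count ≤ c t^(γ-β) / 2) ≤ exp (-c t^(γ-β) / 2)` for `c = 1 - e⁻¹`. -/

open MeasureTheory ProbabilityTheory Finset Real
open scoped ProbabilityTheory

/-- `#E_{k,γ}(t)`: the number of sampling times lying between `s k` and `s k + t^γ`. -/
noncomputable def epochSampCount {Ω : Type*} (Z : ℕ → Ω → ℕ) (s : ℕ → ℕ) (t : ℕ) (γ : ℝ)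
    (k : ℕ) (ω : Ω) : ℕ :=
  ((Finset.Icc 1 t).filter
    (fun j => Z j ω = 1 ∧ s k ≤ j ∧ (j : ℝ) ≤ (s k : ℝ) + (t : ℝ) ^ γ)).card

section Bernoulli

variable {Ω : Type*} [MeasurableSpace Ω] {μ : Measure Ω} [IsProbabilityMeasure μ]

theorem mgf_of_zero_one {X : Ω → ℝ} (hX : Measurable X) (h01 : ∀ ω, X ω = 0 ∨ X ω = 1)
    (θ : ℝ) : mgf X μ θ = 1 - (1 - exp θ) * μ.real {ω | X ω = 1} := by
  have hset : MeasurableSet {ω | X ω = 1} := hX (measurableSet_singleton 1)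
  have hexp : (fun ω => exp (θ * X ω))
      = fun ω => 1 - (1 - exp θ) * {ω | X ω = 1}.indicator 1 ω := by
    funext ω
    rcases h01 ω with h | h <;> simp [h]
  rw [mgf, hexp, integral_sub (integrable_const 1)
    (((integrable_const 1).indicator hset).const_mul _), integral_const_mul,
    integral_indicator_one hset]
  simp

theorem mgf_le_exp_of_zero_one {X : Ω → ℝ} (hX : Measurable X)
    (h01 : ∀ ω, X ω = 0 ∨ X ω = 1) (θ : ℝ) :
    mgf X μ θ ≤ exp (-((1 - exp θ) * μ.real {ω | X ω = 1})) := by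
  rw [mgf_of_zero_one hX h01, sub_eq_neg_add]
  exact add_one_le_exp _

/-- Chernoff's bound for the lower tail of a sum of independent Bernoulli variables. -/
theorem measureReal_sum_le_le_exp_of_zero_one {ι : Type*} {X : ι → Ω → ℝ}
    (hind : iIndepFun X μ) (hX : ∀ i, Measurable (X i)) (h01 : ∀ i ω, X i ω = 0 ∨ X i ω = 1)
    (F : Finset ι) (a : ℝ) {θ : ℝ} (hθ : θ ≤ 0) :
    μ.real {ω | ∑ i ∈ F, X i ω ≤ a}
      ≤ exp (-θ * a - (1 - exp θ) * ∑ i ∈ F, μ.real {ω | X i ω = 1}) := by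
  have hS_nonneg : ∀ ω, 0 ≤ ∑ i ∈ F, X i ω := fun ω =>
    sum_nonneg fun i _ => by rcases h01 i ω with h | h <;> simp [h]
  have hint : Integrable (fun ω => exp (θ * (∑ i ∈ F, X i) ω)) μ := by
    refine .of_mem_Icc 0 1 (by fun_prop) (ae_of_all _ fun ω => ⟨(exp_pos _).le, ?_⟩)
    rw [exp_le_one_iff, Finset.sum_apply]
    exact mul_nonpos_of_nonpos_of_nonneg hθ (hS_nonneg ω)
  calc μ.real {ω | ∑ i ∈ F, X i ω ≤ a}
      ≤ exp (-θ * a) * mgf (∑ i ∈ F, X i) μ θ := by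
        simpa only [Finset.sum_apply] using measure_le_le_exp_mul_mgf a hθ hint
    _ = exp (-θ * a) * ∏ i ∈ F, mgf (X i) μ θ := by rw [hind.mgf_sum hX]
    _ ≤ exp (-θ * a) * ∏ i ∈ F, exp (-((1 - exp θ) * μ.real {ω | X i ω = 1})) := by
        gcongr with i
        · exact fun _ _ => mgf_nonneg
        · exact mgf_le_exp_of_zero_one (hX i) (h01 i) θ
    _ = exp (-θ * a - (1 - exp θ) * ∑ i ∈ F, μ.real {ω | X i ω = 1}) := by
        rw [← exp_sum, ← exp_add, sum_neg_distrib, mul_sum, ← sub_eq_add_neg]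

end Bernoulli

theorem one_sub_ofReal_le_of_measureReal_compl_le {Ω : Type*} [MeasurableSpace Ω]
    {μ : Measure Ω} [IsProbabilityMeasure μ] {A : Set Ω} {e : ℝ} (he : 0 ≤ e)
    (h : μ.real Aᶜ ≤ e) : 1 - ENNReal.ofReal e ≤ μ A := by
  have hcompl : μ Aᶜ ≤ ENNReal.ofReal e :=
    (ENNReal.le_ofReal_iff_toReal_le (measure_ne_top μ _) he).2 h
  calc 1 - ENNReal.ofReal e ≤ 1 - μ Aᶜ := tsub_le_tsub_left hcompl 1
    _ ≤ μ A := by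
      rw [tsub_le_iff_right, ← measure_univ (μ := μ), ← Set.union_compl_self A]
      exact measure_union_le A Aᶜ

theorem strictMonoOn_Icc_of_lt_add_one {β : Type*} [Preorder β] {f : ℕ → β} {a b : ℕ}
    (hf : ∀ k, a ≤ k → k < b → f k < f (k + 1)) : StrictMonoOn f (Set.Icc a b) :=
  strictMonoOn_of_lt_succ Set.ordConnected_Icc fun k _ hk hk1 => by
    rw [Order.succ_eq_add_one] at hk1 ⊢
    exact hf k hk.1 (Nat.lt_of_succ_le hk1.2)

theorem epoch_start_bounds {s : ℕ → ℕ} {M t k : ℕ} {γ γ0 : ℝ} (hs1 : s 1 = 1) (hsM : s M = t)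
    (hmono : ∀ k, 1 ≤ k → k < M → s k < s (k + 1))
    (hgap : ∀ k, 1 ≤ k → k < M → (t : ℝ) ^ γ0 ≤ (s (k + 1) : ℝ) - (s k : ℝ))
    (ht : 1 ≤ t) (hγ : γ ≤ γ0) (hk1 : 1 ≤ k) (hkM : k < M) :
    1 ≤ s k ∧ (s k : ℝ) + (t : ℝ) ^ γ ≤ t := by
  have hs := (strictMonoOn_Icc_of_lt_add_one hmono).monotoneOn
  have hsk : s 1 ≤ s k := hs ⟨le_rfl, by omega⟩ ⟨hk1, hkM.le⟩ hk1
  have hsk1 : s (k + 1) ≤ s M := hs ⟨by omega, hkM⟩ ⟨by omega, le_rfl⟩ hkM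
  have hrpow : (t : ℝ) ^ γ ≤ (t : ℝ) ^ γ0 := rpow_le_rpow_of_exponent_le (by exact_mod_cast ht) hγ
  have hgapk := hgap k hk1 hkM
  have hsk1_le : (s (k + 1) : ℝ) ≤ t := by exact_mod_cast hsM ▸ hsk1
  exact ⟨hs1 ▸ hsk, by linarith⟩

noncomputable def sampleWindow (t a : ℕ) (x : ℝ) : Finset ℕ :=
  (Icc 1 t).filter fun j => a ≤ j ∧ (j : ℝ) ≤ a + x

theorem Icc_subset_sampleWindow {t a : ℕ} {x : ℝ} (ha : 1 ≤ a) (hx : 0 ≤ x)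
    (hat : (a : ℝ) + x ≤ t) : Icc a (a + ⌊x⌋₊) ⊆ sampleWindow t a x := by
  intro j hj
  rw [mem_Icc] at hj
  have hjx : (j : ℝ) ≤ a + x :=
    calc (j : ℝ) ≤ a + ⌊x⌋₊ := by exact_mod_cast hj.2
      _ ≤ a + x := by gcongr; exact Nat.floor_le hx
  have hjt : j ≤ t := by exact_mod_cast hjx.trans hat
  simp only [sampleWindow, mem_filter, mem_Icc]
  exact ⟨⟨ha.trans hj.1, hjt⟩, hj.1, hjx⟩

theorem le_card_sampleWindow {t a : ℕ} {x : ℝ} (ha : 1 ≤ a) (hx : 0 ≤ x)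
    (hat : (a : ℝ) + x ≤ t) : x ≤ #(sampleWindow t a x) :=
  calc x ≤ ⌊x⌋₊ + 1 := (Nat.lt_floor_add_one x).le
    _ = #(Icc a (a + ⌊x⌋₊)) := by
        rw [Nat.card_Icc, Nat.add_assoc, Nat.add_sub_cancel_left]; push_cast; rfl
    _ ≤ #(sampleWindow t a x) := by
        exact_mod_cast card_le_card (Icc_subset_sampleWindow ha hx hat)

theorem mul_rpow_neg_le_sum_sampleWindow {t a : ℕ} {x β : ℝ} (ha : 1 ≤ a) (hx : 0 ≤ x)
    (hat : (a : ℝ) + x ≤ t) (hβ : 0 ≤ β) :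
    x * (t : ℝ) ^ (-β) ≤ ∑ j ∈ sampleWindow t a x, (j : ℝ) ^ (-β) := by
  have hterm : ∀ j ∈ sampleWindow t a x, (t : ℝ) ^ (-β) ≤ (j : ℝ) ^ (-β) := by
    intro j hj
    simp only [sampleWindow, mem_filter, mem_Icc] at hj
    exact rpow_le_rpow_of_nonpos (by exact_mod_cast hj.1.1) (by exact_mod_cast hj.1.2)
      (neg_nonpos.2 hβ)
  calc x * (t : ℝ) ^ (-β) ≤ #(sampleWindow t a x) * (t : ℝ) ^ (-β) := by
        gcongr; exact le_card_sampleWindow ha hx hat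
    _ ≤ ∑ j ∈ sampleWindow t a x, (j : ℝ) ^ (-β) := by
        rw [← nsmul_eq_mul]; exact card_nsmul_le_sum _ _ _ hterm

theorem epochSampCount_eq_sum {Ω : Type*} {Z : ℕ → Ω → ℕ} {ω : Ω}
    (h01 : ∀ j, Z j ω = 0 ∨ Z j ω = 1) (s : ℕ → ℕ) (t : ℕ) (γ : ℝ) (k : ℕ) :
    epochSampCount Z s t γ k ω = ∑ j ∈ sampleWindow t (s k) ((t : ℝ) ^ γ), Z j ω := by
  rw [epochSampCount, sampleWindow, card_filter, sum_filter]
  refine sum_congr rfl fun j _ => ?_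
  rcases h01 j with h | h <;> simp [h]

theorem epoch_sample_count_lower_bound_general
    (γ0 β γ : ℝ) (hβ0 : 0 < β) (hγγ0 : γ < γ0) :
    ∃ C1 C2 : ℝ, 0 < C1 ∧ 0 < C2 ∧ ∃ t0 : ℕ, ∀ t : ℕ, t0 ≤ t →
      ∀ (Ω : Type) (_ : MeasureSpace Ω), IsProbabilityMeasure (ℙ : Measure Ω) →
      ∀ (M : ℕ) (s : ℕ → ℕ) (Z : ℕ → Ω → ℕ),
        2 ≤ M → s 1 = 1 → s M = t →
        (∀ k : ℕ, 1 ≤ k → k < M → s k < s (k + 1)) →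
        (∀ k : ℕ, 1 ≤ k → k < M → (t : ℝ) ^ γ0 ≤ (s (k + 1) : ℝ) - (s k : ℝ)) →
        (∀ j, Measurable (Z j)) →
        (∀ j, ∀ ω, Z j ω = 0 ∨ Z j ω = 1) →
        (∀ j : ℕ, 1 ≤ j → ℙ {ω | Z j ω = 1} = ENNReal.ofReal ((j : ℝ) ^ (-β))) →
        iIndepFun Z ℙ →
        ∀ k : ℕ, 1 ≤ k → k < M →
          1 - ENNReal.ofReal (Real.exp (-C2 * (t : ℝ) ^ (γ - β)))
            ≤ ℙ {ω | C1 * (t : ℝ) ^ (γ - β) ≤ (epochSampCount Z s t γ k ω : ℝ)} := by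
  set c : ℝ := 1 - exp (-1)
  have hc : 0 < c := sub_pos.2 (exp_lt_one_iff.2 (by norm_num))
  refine ⟨c / 2, c / 2, half_pos hc, half_pos hc, 1, fun t ht Ω _ _ M s Z _ hs1 hsM hmono hgap
    hZmeas hZ01 hZprob hZind k hk1 hkM => ?_⟩
  obtain ⟨hsk, hwin⟩ := epoch_start_bounds hs1 hsM hmono hgap ht hγγ0.le hk1 hkM
  set W := sampleWindow t (s k) ((t : ℝ) ^ γ)
  set T := (t : ℝ) ^ (γ - β)
  set X : ℕ → Ω → ℝ := fun j ω => Z j ω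
  have hX01 : ∀ j ω, X j ω = 0 ∨ X j ω = 1 := fun j ω => by
    rcases hZ01 j ω with h | h <;> simp [X, h]
  have hmass : T ≤ ∑ j ∈ W, (ℙ : Measure Ω).real {ω | X j ω = 1} :=
    calc T = (t : ℝ) ^ γ * (t : ℝ) ^ (-β) := by
          rw [← rpow_add (by exact_mod_cast ht), ← sub_eq_add_neg]
      _ ≤ ∑ j ∈ W, (j : ℝ) ^ (-β) :=
          mul_rpow_neg_le_sum_sampleWindow hsk (by positivity) hwin hβ0.le
      _ = ∑ j ∈ W, (ℙ : Measure Ω).real {ω | X j ω = 1} := sum_congr rfl fun j hj => by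
          simp only [X, Nat.cast_eq_one, measureReal_def,
            hZprob j (mem_Icc.1 (mem_filter.1 hj).1).1]
          exact (ENNReal.toReal_ofReal (by positivity)).symm
  have htail := measureReal_sum_le_le_exp_of_zero_one
    (hZind.comp _ fun _ => measurable_from_top) (fun j => measurable_from_top.comp (hZmeas j))
    hX01 W (c / 2 * T) (θ := -1) (by norm_num)
  refine one_sub_ofReal_le_of_measureReal_compl_le (exp_pos _).le ?_
  calc (ℙ : Measure Ω).real {ω | c / 2 * T ≤ (epochSampCount Z s t γ k ω : ℝ)}ᶜ
      ≤ (ℙ : Measure Ω).real {ω | ∑ j ∈ W, X j ω ≤ c / 2 * T} := measureReal_mono fun ω hω => by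
        simp only [Set.mem_compl_iff, Set.mem_ofPred_eq, not_le,
          epochSampCount_eq_sum (hZ01 · ω), Nat.cast_sum] at hω ⊢
        exact hω.le
    _ ≤ exp (-(-1) * (c / 2 * T) - c * ∑ j ∈ W, (ℙ : Measure Ω).real {ω | X j ω = 1}) := htail
    _ ≤ exp (-(c / 2) * T) := by gcongr; nlinarith

/-- Suppose `min_k (s_{k+1} − s_k) ≥ t^{γ0}` and fix `0 < β < γ < γ0`. Then
there exist constants `C1, C2 > 0`, not depending on `k`, such that for all sufficiently
large `t` and every `1 ≤ k ≤ M − 1`,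
`P(#E_{k,γ}(t) ≥ C1·t^{γ−β}) ≥ 1 − exp(−C2·t^{γ−β})`. -/
theorem epoch_sample_count_lower_bound
    (γ0 β γ : ℝ) (hγ00 : 0 < γ0) (hγ01 : γ0 ≤ 1)
    (hβ0 : 0 < β) (hβγ : β < γ) (hγγ0 : γ < γ0) :
    ∃ C1 C2 : ℝ, 0 < C1 ∧ 0 < C2 ∧ ∃ t0 : ℕ, ∀ t : ℕ, t0 ≤ t →
      ∀ (Ω : Type) (_ : MeasureSpace Ω), IsProbabilityMeasure (ℙ : Measure Ω) →
      ∀ (M : ℕ) (s : ℕ → ℕ) (Z : ℕ → Ω → ℕ),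
        2 ≤ M → s 1 = 1 → s M = t →
        (∀ k : ℕ, 1 ≤ k → k < M → s k < s (k + 1)) →
        (∀ k : ℕ, 1 ≤ k → k < M → (t : ℝ) ^ γ0 ≤ (s (k + 1) : ℝ) - (s k : ℝ)) →
        (∀ j, Measurable (Z j)) →
        (∀ j, ∀ ω, Z j ω = 0 ∨ Z j ω = 1) →
        (∀ j : ℕ, 1 ≤ j → ℙ {ω | Z j ω = 1} = ENNReal.ofReal ((j : ℝ) ^ (-β))) →
        iIndepFun Z ℙ →
        ∀ k : ℕ, 1 ≤ k → k < M →
          1 - ENNReal.ofReal (Real.exp (-C2 * (t : ℝ) ^ (γ - β)))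
            ≤ ℙ {ω | C1 * (t : ℝ) ^ (γ - β) ≤ (epochSampCount Z s t γ k ω : ℝ)} :=
  epoch_sample_count_lower_bound_general γ0 β γ hβ0 hγγ0
end

section
/- Let 0 < β < 1 and let {Z_j}_{j≥1} be independent Bernoulli random variables with P(Z_j = 1) = j^{−β}; write #E(r) = Σ_{j=1}^r Z_j and a(1,r) = Σ_{j=1}^r j^{−β}. Define E_exp = ∩_{r ≥ (log t)^{2/(1−β)}} { a(1,r)(1 − 1/log r) ≤ #E(r) ≤ a(1,r)(1 + 1/log r) }, the intersection over all integers r with (log t)^{2/(1−β)} ≤ r ≤ t. Then for all sufficiently large t, P(E_exp) ≥ 1 − exp(−(log t)^{3/2}). -/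
open MeasureTheory ProbabilityTheory Finset Real
open scoped ProbabilityTheory

/-- `#E(r)`, the number of sampling times among `{1, …, r}`. -/
def sampCount {Ω : Type*} (Z : ℕ → Ω → ℕ) (r : ℕ) (ω : Ω) : ℕ :=
  ((Finset.Icc 1 r).filter (fun j => Z j ω = 1)).card

open Filter

/-!
For each `r`, `#E(r)` is a sum of independent Bernoulli variables with mean `a(1,r) ≥ r^{1-β}`.
Chernoff's bound with `ε = 1 / log r` makes the deviation probability at most
`2 exp(-r^{1-β} / (4 (log r)²))`, which is `≤ 2 exp(-3 (log t)^{3/2})` once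
`r ≥ (log t)^{2/(1-β)}` and `t` is large. The union bound over the at most `t = exp (log t)`
values of `r` is then absorbed by the spare factor `exp(-2 (log t)^{3/2})`.
-/

lemma Real.exp_le_one_add_add_sq {x : ℝ} (hx : |x| ≤ 1) : exp x ≤ 1 + x + x ^ 2 := by
  linarith [(abs_le.1 (abs_exp_sub_one_sub_id_le hx)).2]

section Bernoulli

variable {Ω ι : Type*}

lemma exp_mul_natCast_eq_indicator {Y : Ω → ℕ} (hY : ∀ ω, Y ω = 0 ∨ Y ω = 1) (t : ℝ) :
    (fun ω => exp (t * Y ω)) = fun ω => {ω | Y ω = 1}.indicator (fun _ => exp t - 1) ω + 1 := by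
  funext ω
  rcases hY ω with h | h <;> simp [h]

variable [MeasurableSpace Ω] {μ : Measure Ω}

lemma integrable_exp_mul_natCast [IsFiniteMeasure μ] {Y : Ω → ℕ} (hm : Measurable Y)
    (hY : ∀ ω, Y ω = 0 ∨ Y ω = 1) (t : ℝ) :
    Integrable (fun ω => exp (t * Y ω)) μ := by
  rw [exp_mul_natCast_eq_indicator hY]
  exact ((integrable_const _).indicator (hm (measurableSet_singleton 1))).add (integrable_const 1)

lemma mgf_natCast_eq [IsProbabilityMeasure μ] {Y : Ω → ℕ} (hm : Measurable Y)
    (hY : ∀ ω, Y ω = 0 ∨ Y ω = 1) (t : ℝ) :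
    mgf (fun ω => (Y ω : ℝ)) μ t = 1 + (exp t - 1) * μ.real {ω | Y ω = 1} := by
  have hs : MeasurableSet {ω | Y ω = 1} := hm (measurableSet_singleton 1)
  rw [mgf, exp_mul_natCast_eq_indicator hY, integral_add ((integrable_const _).indicator hs)
    (integrable_const 1), integral_indicator_const _ hs, integral_const, smul_eq_mul,
    smul_eq_mul, probReal_univ, one_mul]
  ring

variable {Z : ι → Ω → ℕ}

lemma mgf_sum_natCast_le [IsProbabilityMeasure μ] (hm : ∀ j, Measurable (Z j))
    (hZ : ∀ j ω, Z j ω = 0 ∨ Z j ω = 1) (hindep : iIndepFun Z μ) (s : Finset ι) (t : ℝ) :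
    mgf (fun ω => ∑ j ∈ s, (Z j ω : ℝ)) μ t
      ≤ exp ((exp t - 1) * ∑ j ∈ s, μ.real {ω | Z j ω = 1}) := by
  have hX : iIndepFun (fun j ω => (Z j ω : ℝ)) μ :=
    hindep.comp (fun _ (n : ℕ) => (n : ℝ)) fun _ => measurable_from_nat
  have hsum := hX.mgf_sum (fun j => measurable_from_nat.comp (hm j)) s (t := t)
  simp only [Finset.sum_fn] at hsum
  rw [hsum, mul_sum, exp_sum]
  gcongr with j
  · exact fun _ _ => mgf_nonneg
  · rw [mgf_natCast_eq (hm j) (hZ j)]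
    exact add_one_le_exp _ |>.trans_eq' (add_comm _ _)

/-- Chernoff's bound on both tails, using `exp x ≤ 1 + x + x²` at `x = ±ε/2`. -/
theorem measure_sum_natCast_deviation_le [IsProbabilityMeasure μ]
    (hm : ∀ j, Measurable (Z j)) (hZ : ∀ j ω, Z j ω = 0 ∨ Z j ω = 1) (hindep : iIndepFun Z μ)
    (s : Finset ι) {ε : ℝ} (hε0 : 0 ≤ ε) (hε1 : ε ≤ 1) :
    μ {ω | ¬ ((∑ j ∈ s, μ.real {ω | Z j ω = 1}) * (1 - ε) ≤ ∑ j ∈ s, (Z j ω : ℝ) ∧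
        ∑ j ∈ s, (Z j ω : ℝ) ≤ (∑ j ∈ s, μ.real {ω | Z j ω = 1}) * (1 + ε))}
      ≤ ENNReal.ofReal (2 * exp (-(ε ^ 2 / 4) * ∑ j ∈ s, μ.real {ω | Z j ω = 1})) := by
  set m := ∑ j ∈ s, μ.real {ω | Z j ω = 1}
  set S := fun ω => ∑ j ∈ s, (Z j ω : ℝ)
  have hint (t : ℝ) : Integrable (fun ω => exp (t * S ω)) μ := by
    have := (hindep.comp (fun _ (n : ℕ) => (n : ℝ)) fun _ => measurable_from_nat)
      |>.integrable_exp_mul_sum (fun j => measurable_from_nat.comp (hm j)) (s := s) (t := t)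
      fun j _ => integrable_exp_mul_natCast (hm j) (hZ j) t
    simpa only [Finset.sum_apply, Function.comp_apply, S] using this
  have hm0 : 0 ≤ m := sum_nonneg fun _ _ => measureReal_nonneg
  have hlower : μ.real {ω | S ω ≤ m * (1 - ε)} ≤ exp (-(ε ^ 2 / 4) * m) := by
    refine (measure_le_le_exp_mul_mgf _ (by linarith : -(ε / 2) ≤ 0) (hint _)).trans ?_
    refine (mul_le_mul_of_nonneg_left (mgf_sum_natCast_le hm hZ hindep s _)
      (exp_pos _).le).trans ?_
    rw [← exp_add, exp_le_exp]
    have := exp_le_one_add_add_sq (x := -(ε / 2)) (by rw [abs_le]; constructor <;> linarith)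
    nlinarith
  have hupper : μ.real {ω | m * (1 + ε) ≤ S ω} ≤ exp (-(ε ^ 2 / 4) * m) := by
    refine (measure_ge_le_exp_mul_mgf _ (by linarith : 0 ≤ ε / 2) (hint _)).trans ?_
    refine (mul_le_mul_of_nonneg_left (mgf_sum_natCast_le hm hZ hindep s _)
      (exp_pos _).le).trans ?_
    rw [← exp_add, exp_le_exp]
    have := exp_le_one_add_add_sq (x := ε / 2) (by rw [abs_le]; constructor <;> linarith)
    nlinarith
  calc μ {ω | ¬ (m * (1 - ε) ≤ S ω ∧ S ω ≤ m * (1 + ε))}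
      ≤ μ ({ω | S ω ≤ m * (1 - ε)} ∪ {ω | m * (1 + ε) ≤ S ω}) := by
        refine measure_mono fun ω hω => ?_
        simp only [Set.mem_ofPred_eq, not_and_or, not_le] at hω
        exact hω.imp le_of_lt le_of_lt
    _ ≤ μ {ω | S ω ≤ m * (1 - ε)} + μ {ω | m * (1 + ε) ≤ S ω} := measure_union_le _ _
    _ ≤ ENNReal.ofReal (exp (-(ε ^ 2 / 4) * m)) + ENNReal.ofReal (exp (-(ε ^ 2 / 4) * m)) := by
        gcongr <;> rw [ENNReal.le_ofReal_iff_toReal_le (measure_ne_top _ _) (exp_pos _).le]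
        exacts [hlower, hupper]
    _ = ENNReal.ofReal (2 * exp (-(ε ^ 2 / 4) * m)) := by
        rw [← ENNReal.ofReal_add (exp_pos _).le (exp_pos _).le, two_mul]

end Bernoulli

lemma rpow_one_sub_le_sum_Icc_rpow_neg {β : ℝ} (hβ : 0 ≤ β) {r : ℕ} (hr : 1 ≤ r) :
    (r : ℝ) ^ (1 - β) ≤ ∑ j ∈ Icc 1 r, (j : ℝ) ^ (-β) := by
  have hr0 : (0 : ℝ) < r := by exact_mod_cast hr
  calc (r : ℝ) ^ (1 - β) = (Icc 1 r).card • (r : ℝ) ^ (-β) := by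
        rw [Nat.card_Icc, Nat.add_sub_cancel, nsmul_eq_mul, sub_eq_add_neg, rpow_add hr0,
          rpow_one]
    _ ≤ ∑ j ∈ Icc 1 r, (j : ℝ) ^ (-β) := by
        refine card_nsmul_le_sum _ _ _ fun j hj => ?_
        obtain ⟨hj1, hjr⟩ := mem_Icc.1 hj
        exact rpow_le_rpow_of_nonpos (by exact_mod_cast hj1) (by exact_mod_cast hjr)
          (neg_nonpos.2 hβ)

lemma rpow_three_halves_le_rpow_of_rpow_le {γ L x : ℝ} (hγ : 0 < γ) (hL : 0 ≤ L)
    (hx : L ^ (2 / γ) ≤ x) : L ^ (3 / 2 : ℝ) ≤ x ^ (3 * γ / 4) := by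
  calc L ^ (3 / 2 : ℝ) = (L ^ (2 / γ)) ^ (3 * γ / 4) := by
        rw [← rpow_mul hL]; congr 1; field_simp; ring
    _ ≤ x ^ (3 * γ / 4) := by gcongr

lemma eventually_mul_log_sq_le_rpow (c : ℝ) {γ : ℝ} (hγ : 0 < γ) :
    ∀ᶠ x : ℝ in atTop, c * log x ^ 2 ≤ x ^ γ := by
  filter_upwards [((isLittleO_log_rpow_rpow_atTop 2 hγ).const_mul_left c).bound one_pos,
    eventually_ge_atTop 0] with x hx hx0
  rw [one_mul, norm_of_nonneg (rpow_nonneg hx0 γ), rpow_two] at hx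
  exact (le_abs_self _).trans hx

/-- Split `r^{1-β} = r^{3(1-β)/4} r^{(1-β)/4}`: the first factor dominates `(log t)^{3/2}`, the
second `12 (log r)²`. -/
lemma eventually_three_mul_log_rpow_le {β : ℝ} (hβ : β < 1) :
    ∀ᶠ t : ℕ in atTop, 1 ≤ log t ∧ ∀ r : ℕ, log t ^ (2 / (1 - β)) ≤ r →
      1 ≤ log r ∧ 3 * log t ^ (3 / 2 : ℝ) ≤ (1 / log r) ^ 2 / 4 * (r : ℝ) ^ (1 - β) := by
  have hγ : 0 < 1 - β := sub_pos.2 hβ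
  obtain ⟨r₁, hr₁⟩ := eventually_atTop.1 ((eventually_mul_log_sq_le_rpow 12
    (by positivity : 0 < (1 - β) / 4)).and (eventually_ge_atTop 3))
  have hlog : Tendsto (fun t : ℕ => log t) atTop atTop :=
    tendsto_log_atTop.comp tendsto_natCast_atTop_atTop
  filter_upwards [hlog.eventually_ge_atTop 1,
    ((tendsto_rpow_atTop (div_pos two_pos hγ)).comp hlog).eventually_ge_atTop r₁] with t hL hLr₁
  refine ⟨hL, fun r hr => ?_⟩
  obtain ⟨hlog_sq, hr3⟩ := hr₁ r (hLr₁.trans hr)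
  have hr0 : (0 : ℝ) < r := by linarith
  have hlog_r : 1 ≤ log r := by
    rw [le_log_iff_exp_le hr0]; linarith [exp_one_lt_three]
  refine ⟨hlog_r, ?_⟩
  calc 3 * log t ^ (3 / 2 : ℝ)
      = (1 / log r) ^ 2 / 4 * (log t ^ (3 / 2 : ℝ) * (12 * log r ^ 2)) := by
        field_simp; ring
    _ ≤ (1 / log r) ^ 2 / 4 * ((r : ℝ) ^ (3 * (1 - β) / 4) * (r : ℝ) ^ ((1 - β) / 4)) := by
        gcongr
        exact rpow_three_halves_le_rpow_of_rpow_le hγ (by linarith) hr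
    _ = (1 / log r) ^ 2 / 4 * (r : ℝ) ^ (1 - β) := by
        rw [← rpow_add hr0]; ring_nf

lemma natCast_mul_two_mul_exp_le {t : ℕ} (ht : 1 ≤ log t) :
    t * (2 * exp (-3 * log t ^ (3 / 2 : ℝ))) ≤ exp (-log t ^ (3 / 2 : ℝ)) := by
  have ht0 : (0 : ℝ) < t := Nat.cast_pos.2 <| Nat.pos_of_ne_zero fun h => by norm_num [h] at ht
  have hL : log t ≤ log t ^ (3 / 2 : ℝ) := by
    simpa using rpow_le_rpow_of_exponent_le ht (by norm_num : (1 : ℝ) ≤ 3 / 2)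
  calc (t : ℝ) * (2 * exp (-3 * log t ^ (3 / 2 : ℝ)))
      = exp (log t + log 2 + -3 * log t ^ (3 / 2 : ℝ)) := by
        rw [exp_add, exp_add, exp_log ht0, exp_log two_pos, mul_assoc]
    _ ≤ exp (-log t ^ (3 / 2 : ℝ)) := by
        rw [exp_le_exp]; linarith [log_two_lt_d9]

lemma sampCount_eq_sum {Ω : Type*} {Z : ℕ → Ω → ℕ} (hZ : ∀ j ω, Z j ω = 0 ∨ Z j ω = 1)
    (r : ℕ) (ω : Ω) : (sampCount Z r ω : ℝ) = ∑ j ∈ Icc 1 r, (Z j ω : ℝ) := by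
  rw [sampCount, card_filter, Nat.cast_sum]
  refine sum_congr rfl fun j _ => ?_
  rcases hZ j ω with h | h <;> simp [h]

lemma measure_sampCount_deviation_le {Ω : Type*} [MeasurableSpace Ω] {μ : Measure Ω}
    [IsProbabilityMeasure μ] {β : ℝ} (hβ : 0 ≤ β) {Z : ℕ → Ω → ℕ} (hm : ∀ j, Measurable (Z j))
    (hZ : ∀ j ω, Z j ω = 0 ∨ Z j ω = 1)
    (hdist : ∀ j : ℕ, 1 ≤ j → μ {ω | Z j ω = 1} = ENNReal.ofReal ((j : ℝ) ^ (-β)))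
    (hindep : iIndepFun Z μ) {r : ℕ} (hr : 1 ≤ r) {ε : ℝ} (hε0 : 0 ≤ ε) (hε1 : ε ≤ 1) :
    μ {ω | ¬ ((∑ j ∈ Icc 1 r, (j : ℝ) ^ (-β)) * (1 - ε) ≤ sampCount Z r ω ∧
        (sampCount Z r ω : ℝ) ≤ (∑ j ∈ Icc 1 r, (j : ℝ) ^ (-β)) * (1 + ε))}
      ≤ ENNReal.ofReal (2 * exp (-(ε ^ 2 / 4) * (r : ℝ) ^ (1 - β))) := by
  have hmean : ∑ j ∈ Icc 1 r, μ.real {ω | Z j ω = 1} = ∑ j ∈ Icc 1 r, (j : ℝ) ^ (-β) :=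
    sum_congr rfl fun j hj => by
      rw [measureReal_def, hdist j (mem_Icc.1 hj).1, ENNReal.toReal_ofReal (by positivity)]
  simp_rw [sampCount_eq_sum hZ, ← hmean]
  refine (measure_sum_natCast_deviation_le hm hZ hindep _ hε0 hε1).trans
    (ENNReal.ofReal_le_ofReal ?_)
  rw [hmean, neg_mul, neg_mul]
  gcongr
  exact rpow_one_sub_le_sum_Icc_rpow_neg hβ hr

/-- Let `0 < β < 1` and `{Z_j}` be independent Bernoulli with
`P(Z_j = 1) = j^{−β}`; write `#E(r) = Σ_{j=1}^r Z_j` and `a(1,r) = Σ_{j=1}^r j^{−β}`.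
For the event `E_exp` that `a(1,r)(1 − 1/log r) ≤ #E(r) ≤ a(1,r)(1 + 1/log r)` holds
simultaneously for all integers `(log t)^{2/(1−β)} ≤ r ≤ t`, we have, for all
sufficiently large `t`, `P(E_exp) ≥ 1 − exp(−(log t)^{3/2})`. -/
theorem sample_count_uniform_bound
    {Ω : Type*} [MeasureSpace Ω] [IsProbabilityMeasure (ℙ : Measure Ω)]
    (β : ℝ) (hβ0 : 0 < β) (hβ1 : β < 1)
    (Z : ℕ → Ω → ℕ)
    (hmeas : ∀ j, Measurable (Z j))
    (hval : ∀ j, ∀ ω, Z j ω = 0 ∨ Z j ω = 1)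
    (hdist : ∀ j : ℕ, 1 ≤ j → ℙ {ω | Z j ω = 1} = ENNReal.ofReal ((j : ℝ) ^ (-β)))
    (hindep : iIndepFun Z ℙ) :
    ∃ t0 : ℕ, ∀ t : ℕ, t0 ≤ t →
      1 - ENNReal.ofReal (Real.exp (-(Real.log t) ^ ((3 : ℝ) / 2)))
        ≤ ℙ {ω | ∀ r : ℕ, (Real.log t) ^ (2 / (1 - β)) ≤ (r : ℝ) → r ≤ t →
              (∑ j ∈ Finset.Icc 1 r, (j : ℝ) ^ (-β)) * (1 - 1 / Real.log r)
                  ≤ (sampCount Z r ω : ℝ) ∧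
                (sampCount Z r ω : ℝ)
                  ≤ (∑ j ∈ Finset.Icc 1 r, (j : ℝ) ^ (-β)) * (1 + 1 / Real.log r)} := by
  obtain ⟨t₀, ht₀⟩ := eventually_atTop.1 (eventually_three_mul_log_rpow_le hβ1)
  refine ⟨t₀, fun t ht => ?_⟩
  obtain ⟨hlog_t, hlarge⟩ := ht₀ t ht
  have hr_pos {r : ℕ} (hr : log t ^ (2 / (1 - β)) ≤ r) : 1 ≤ r :=
    Nat.one_le_iff_ne_zero.2 fun h => by
      have hlog_r := (hlarge r hr).1
      norm_num [h] at hlog_r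
  set R := (Icc 1 t).filter fun r : ℕ => log t ^ (2 / (1 - β)) ≤ r
  set bad := fun r : ℕ => {ω | ¬ ((∑ j ∈ Icc 1 r, (j : ℝ) ^ (-β)) * (1 - 1 / log r)
      ≤ sampCount Z r ω ∧ (sampCount Z r ω : ℝ) ≤ (∑ j ∈ Icc 1 r, (j : ℝ) ^ (-β)) * (1 + 1 / log r))}
  have hbad (r : ℕ) (hr : r ∈ R) :
      ℙ (bad r) ≤ ENNReal.ofReal (2 * exp (-3 * log t ^ (3 / 2 : ℝ))) := by
    obtain ⟨hlog_r, hexponent⟩ := hlarge r (mem_filter.1 hr).2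
    refine (measure_sampCount_deviation_le hβ0.le hmeas hval hdist hindep
      (hr_pos (mem_filter.1 hr).2) (by positivity) ((div_le_one (by linarith)).2 hlog_r)).trans
      (ENNReal.ofReal_le_ofReal ?_)
    gcongr 2 * exp ?_
    linarith
  refine tsub_le_iff_right.2 <| measure_univ.symm.le.trans <|
    (measure_univ_le_add_compl _).trans (add_le_add le_rfl ?_)
  calc _ ≤ ℙ (⋃ r ∈ R, bad r) := measure_mono fun ω hω => by
        simp only [Set.mem_compl_iff, Set.mem_ofPred_eq, not_forall] at hω
        obtain ⟨r, hr, hrt, hdev⟩ := hω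
        exact Set.mem_biUnion (mem_filter.2 ⟨mem_Icc.2 ⟨hr_pos hr, hrt⟩, hr⟩) hdev
    _ ≤ R.card • ENNReal.ofReal (2 * exp (-3 * log t ^ (3 / 2 : ℝ))) :=
        (measure_biUnion_finset_le R bad).trans (sum_le_card_nsmul _ _ _ hbad)
    _ ≤ ENNReal.ofReal (t * (2 * exp (-3 * log t ^ (3 / 2 : ℝ)))) := by
        rw [nsmul_eq_mul, ENNReal.ofReal_mul (Nat.cast_nonneg t), ENNReal.ofReal_natCast]
        gcongr
        simpa using card_filter_le (Icc 1 t) _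
    _ ≤ _ := ENNReal.ofReal_le_ofReal (natCast_mul_two_mul_exp_le hlog_t)
end

section
/- Suppose min_k(s_{k+1}−s_k) ≥ t^{γ0} and fix 0 < β < γ < γ0. Define E_exp as the event that a(1,r)(1 − 1/log r) ≤ #E(r) ≤ a(1,r)(1 + 1/log r) simultaneously for all integers (log t)^{2/(1−β)} ≤ r ≤ t, and E_diff = ∩_{k=1}^{M−1} { L_{k+1} − U_k ≥ t^{γ−β}/2 }. Then there exists a constant C > 0 such that for all sufficiently large t, P(E_exp ∩ E_diff) ≥ 1 − exp(−(log t)^{3/2}) − t·exp(−C·t^{γ−β}). -/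
/-!
Both events are handled by Chernoff bounds for sums of independent Bernoulli variables and union
bounds.

For `E_exp`: `#E(r)` has mean `a(1,r) ≥ r^{1-β}`, so a relative deviation `1/log r` has
probability at most `2 exp(-a(1,r)/(4 log² r)) ≤ 2 exp(-(log t)^{7/4})` once
`r ≥ (log t)^{2/(1-β)}`; the union over `r ≤ t` costs a factor `t`, absorbed by
`(log t)^{7/4} ≫ (log t)^{3/2} + log t`.

For `E_diff`: put `m = ⌈t^γ⌉` and look at the blocks `[s_{k+1}, s_{k+1}+m)` and
`[s_{k+1}+m, s_{k+1}+2m)`, which fit below `s_{k+2}` since `t^{γ0} ≫ t^γ`. The sampling times in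
the first block have indices strictly between `U_k` and `L_{k+1}`, provided the second block
contains a sampling time (otherwise `L_{k+1}` is `sInf ∅ = 0`). Each block has mean count at least
`t^{γ-β}`, so the first one holds fewer than `t^{γ-β}/2` sampling times, or the second one none,
with probability at most `2 exp(-t^{γ-β}/8)`.
-/

open MeasureTheory ProbabilityTheory Finset Real
open scoped ProbabilityTheory

/-- `T(l)`, the `l`-th smallest sampling time in `E(t)` (for `1 ≤ l ≤ #E(t)`). -/
def Tidx {Ω : Type*} (Z : ℕ → Ω → ℕ) (t : ℕ) (l : ℕ) (ω : Ω) : ℕ :=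
  (((Finset.Icc 1 t).filter (fun j => Z j ω = 1)).sort (· ≤ ·)).getD (l - 1) 0

/-- `L_k`: the smallest index `l` with `T(l) ≥ s_k + t^γ`. -/
noncomputable def Lidx {Ω : Type*} (Z : ℕ → Ω → ℕ) (s : ℕ → ℕ) (t : ℕ) (γ : ℝ)
    (k : ℕ) (ω : Ω) : ℕ :=
  sInf {l : ℕ | 1 ≤ l ∧ l ≤ sampCount Z t ω ∧
    (s k : ℝ) + (t : ℝ) ^ γ ≤ (Tidx Z t l ω : ℝ)}

/-- `U_k`: the largest index `l` with `T(l) ≤ s_{k+1} − 1`. -/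
noncomputable def Uidx {Ω : Type*} (Z : ℕ → Ω → ℕ) (s : ℕ → ℕ) (t : ℕ)
    (k : ℕ) (ω : Ω) : ℕ :=
  sSup {l : ℕ | 1 ≤ l ∧ l ≤ sampCount Z t ω ∧ Tidx Z t l ω ≤ s (k + 1) - 1}

open Filter

section Chernoff

variable {ι Ω : Type*} {m : MeasurableSpace Ω} {μ : Measure Ω} {Z : ι → Ω → ℕ}

lemma exp_mul_natCast_of_zero_or_one {n : ℕ} (hn : n = 0 ∨ n = 1) (θ : ℝ) :
    exp (θ * n) = 1 + (exp θ - 1) * n := by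
  rcases hn with rfl | rfl <;> simp

lemma mgf_natCast_of_zero_or_one [IsProbabilityMeasure μ] {X : Ω → ℕ} (hX : Measurable X)
    (hX01 : ∀ ω, X ω = 0 ∨ X ω = 1) (θ : ℝ) :
    mgf (fun ω => (X ω : ℝ)) μ θ = 1 + (exp θ - 1) * μ.real {ω | X ω = 1} := by
  have hset : MeasurableSet {ω | X ω = 1} := hX (measurableSet_singleton 1)
  have hX_eq (ω : Ω) : (X ω : ℝ) = {ω | X ω = 1}.indicator 1 ω := by
    rcases hX01 ω with h | h <;> simp [h]
  have hexp (ω : Ω) : exp (θ * X ω) = 1 + (exp θ - 1) * X ω :=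
    exp_mul_natCast_of_zero_or_one (hX01 ω) θ
  simp_rw [mgf, hexp, hX_eq]
  rw [integral_add (integrable_const 1) ((integrable_const 1).indicator hset |>.const_mul _),
    integral_const_mul, integral_indicator_one hset]
  simp

lemma mgf_sum_le_exp (hZm : ∀ i, Measurable (Z i)) (hZ01 : ∀ i ω, Z i ω = 0 ∨ Z i ω = 1)
    (hZind : iIndepFun Z μ) (s : Finset ι) (θ : ℝ) :
    mgf (fun ω => ∑ i ∈ s, (Z i ω : ℝ)) μ θ
      ≤ exp ((exp θ - 1) * ∑ i ∈ s, μ.real {ω | Z i ω = 1}) := by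
  have := hZind.isProbabilityMeasure
  have hX : iIndepFun (fun i ω => (Z i ω : ℝ)) μ :=
    hZind.comp (fun _ n => (n : ℝ)) fun _ => measurable_from_top
  have hsum : (fun ω => ∑ i ∈ s, (Z i ω : ℝ)) = ∑ i ∈ s, fun ω => (Z i ω : ℝ) := by
    ext ω
    simp
  rw [hsum, hX.mgf_sum (fun i => measurable_from_top.comp (hZm i)), mul_sum, exp_sum]
  refine prod_le_prod (fun i _ => mgf_nonneg) fun i _ => ?_
  rw [mgf_natCast_of_zero_or_one (hZm i) (hZ01 i)]
  linarith [add_one_le_exp ((exp θ - 1) * μ.real {ω | Z i ω = 1})]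

lemma integrable_exp_mul_sum [IsFiniteMeasure μ] (hZm : ∀ i, Measurable (Z i))
    (hZ01 : ∀ i ω, Z i ω = 0 ∨ Z i ω = 1) (s : Finset ι) (θ : ℝ) :
    Integrable (fun ω => exp (θ * ∑ i ∈ s, (Z i ω : ℝ))) μ := by
  refine integrable_exp_mul_of_mem_Icc (a := 0) (b := s.card)
    (Finset.measurable_sum s fun i _ => measurable_from_top.comp (hZm i)).aemeasurable
    (ae_of_all _ fun ω => ⟨sum_nonneg fun i _ => by positivity, ?_⟩)
  rw [card_eq_sum_ones, Nat.cast_sum]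
  exact sum_le_sum fun i _ => by rcases hZ01 i ω with h | h <;> simp [h]

lemma measure_sum_le_le_exp (hZm : ∀ i, Measurable (Z i))
    (hZ01 : ∀ i ω, Z i ω = 0 ∨ Z i ω = 1) (hZind : iIndepFun Z μ) (s : Finset ι) {θ : ℝ}
    (hθ : θ ≤ 0) (c : ℝ) :
    μ {ω | ∑ i ∈ s, (Z i ω : ℝ) ≤ c}
      ≤ ENNReal.ofReal (exp (-θ * c + (exp θ - 1) * ∑ i ∈ s, μ.real {ω | Z i ω = 1})) := by
  have := hZind.isProbabilityMeasure
  rw [← ofReal_measureReal, exp_add]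
  refine ENNReal.ofReal_le_ofReal <| (measure_le_le_exp_mul_mgf c hθ
    (integrable_exp_mul_sum hZm hZ01 s θ)).trans ?_
  gcongr
  exact mgf_sum_le_exp hZm hZ01 hZind s θ

lemma measure_le_sum_le_exp (hZm : ∀ i, Measurable (Z i))
    (hZ01 : ∀ i ω, Z i ω = 0 ∨ Z i ω = 1) (hZind : iIndepFun Z μ) (s : Finset ι) {θ : ℝ}
    (hθ : 0 ≤ θ) (c : ℝ) :
    μ {ω | c ≤ ∑ i ∈ s, (Z i ω : ℝ)}
      ≤ ENNReal.ofReal (exp (-θ * c + (exp θ - 1) * ∑ i ∈ s, μ.real {ω | Z i ω = 1})) := by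
  have := hZind.isProbabilityMeasure
  rw [← ofReal_measureReal, exp_add]
  refine ENNReal.ofReal_le_ofReal <| (measure_ge_le_exp_mul_mgf c hθ
    (integrable_exp_mul_sum hZm hZ01 s θ)).trans ?_
  gcongr
  exact mgf_sum_le_exp hZm hZ01 hZind s θ

/-- Multiplicative Chernoff bound, from `θ = ∓δ/2` and `exp x ≤ 1 + x + x²` for `|x| ≤ 1`. -/
lemma measure_sum_notMem_Icc_le (hZm : ∀ i, Measurable (Z i))
    (hZ01 : ∀ i ω, Z i ω = 0 ∨ Z i ω = 1) (hZind : iIndepFun Z μ) (s : Finset ι) {δ : ℝ}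
    (hδ0 : 0 ≤ δ) (hδ1 : δ ≤ 1) :
    μ {ω | ∑ i ∈ s, (Z i ω : ℝ) ∉ Set.Icc ((∑ i ∈ s, μ.real {ω | Z i ω = 1}) * (1 - δ))
        ((∑ i ∈ s, μ.real {ω | Z i ω = 1}) * (1 + δ))}
      ≤ ENNReal.ofReal (2 * exp (-((∑ i ∈ s, μ.real {ω | Z i ω = 1}) * δ ^ 2 / 4))) := by
  set a := ∑ i ∈ s, μ.real {ω | Z i ω = 1}
  have ha : 0 ≤ a := sum_nonneg fun _ _ => measureReal_nonneg
  have hexp {x : ℝ} (hx : |x| ≤ 1) : (exp x - 1) * a ≤ (x + x ^ 2) * a :=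
    mul_le_mul_of_nonneg_right (by linarith [(abs_le.mp (abs_exp_sub_one_sub_id_le hx)).2]) ha
  have hlow : -(-(δ / 2)) * (a * (1 - δ)) + (exp (-(δ / 2)) - 1) * a ≤ -(a * δ ^ 2 / 4) := by
    nlinarith [hexp (x := -(δ / 2)) (abs_le.mpr ⟨by linarith, by linarith⟩)]
  have hup : -(δ / 2) * (a * (1 + δ)) + (exp (δ / 2) - 1) * a ≤ -(a * δ ^ 2 / 4) := by
    nlinarith [hexp (x := δ / 2) (abs_le.mpr ⟨by linarith, by linarith⟩)]
  calc _ ≤ μ ({ω | ∑ i ∈ s, (Z i ω : ℝ) ≤ a * (1 - δ)}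
          ∪ {ω | a * (1 + δ) ≤ ∑ i ∈ s, (Z i ω : ℝ)}) := by
        refine measure_mono fun ω hω => ?_
        simp only [Set.mem_ofPred_eq, Set.mem_Icc, not_and_or, not_le] at hω
        exact hω.imp le_of_lt le_of_lt
    _ ≤ ENNReal.ofReal (exp (-(a * δ ^ 2 / 4))) + ENNReal.ofReal (exp (-(a * δ ^ 2 / 4))) :=
        (measure_union_le _ _).trans <| add_le_add
          ((measure_sum_le_le_exp hZm hZ01 hZind s (by linarith) _).trans
            (ENNReal.ofReal_le_ofReal (exp_le_exp.mpr hlow)))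
          ((measure_le_sum_le_exp hZm hZ01 hZind s (by linarith) _).trans
            (ENNReal.ofReal_le_ofReal (exp_le_exp.mpr hup)))
    _ = _ := by rw [← ENNReal.ofReal_add (by positivity) (by positivity), two_mul]

lemma measure_sum_le_half_le (hZm : ∀ i, Measurable (Z i))
    (hZ01 : ∀ i ω, Z i ω = 0 ∨ Z i ω = 1) (hZind : iIndepFun Z μ) (s : Finset ι) {T c : ℝ}
    (hT0 : 0 ≤ T) (hT : T ≤ ∑ i ∈ s, μ.real {ω | Z i ω = 1}) (hc : c ≤ T / 2) :
    μ {ω | ∑ i ∈ s, (Z i ω : ℝ) ≤ c} ≤ ENNReal.ofReal (exp (-(T / 8))) := by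
  refine (measure_sum_le_le_exp hZm hZ01 hZind s (θ := -1) (by norm_num) c).trans
    (ENNReal.ofReal_le_ofReal (exp_le_exp.mpr ?_))
  have he : exp (-1) ≤ 3 / 8 := by
    have h1 : exp (-1) * exp 1 = 1 := by rw [← exp_add]; norm_num
    nlinarith [exp_one_gt_d9, exp_pos (-1)]
  nlinarith

lemma natCast_card_filter_eq_sum (hZ01 : ∀ i ω, Z i ω = 0 ∨ Z i ω = 1) (S : Finset ι)
    (ω : Ω) : ((S.filter fun i => Z i ω = 1).card : ℝ) = ∑ i ∈ S, (Z i ω : ℝ) := by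
  rw [card_filter, Nat.cast_sum]
  exact sum_congr rfl fun i _ => by rcases hZ01 i ω with h | h <;> simp [h]

end Chernoff

lemma one_sub_sub_le_measure_inter {Ω : Type*} {m : MeasurableSpace Ω} {μ : Measure Ω}
    [IsProbabilityMeasure μ] (A B : Set Ω) : 1 - μ Aᶜ - μ Bᶜ ≤ μ (A ∩ B) := by
  rw [tsub_tsub, tsub_le_iff_right, ← measure_univ (μ := μ)]
  calc μ Set.univ ≤ μ (A ∩ B) + μ (A ∩ B)ᶜ := measure_univ_le_add_compl _
    _ ≤ μ (A ∩ B) + (μ Aᶜ + μ Bᶜ) := by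
      rw [Set.compl_inter]
      gcongr
      exact measure_union_le _ _

lemma card_mul_rpow_neg_le_sum {β : ℝ} (hβ : 0 ≤ β) {t : ℕ} {S : Finset ℕ}
    (hS : S ⊆ Icc 1 t) : (S.card : ℝ) * (t : ℝ) ^ (-β) ≤ ∑ j ∈ S, (j : ℝ) ^ (-β) := by
  rw [← nsmul_eq_mul, ← sum_const]
  refine sum_le_sum fun j hj => ?_
  obtain ⟨h1, h2⟩ := mem_Icc.mp (hS hj)
  exact rpow_le_rpow_of_nonpos (by exact_mod_cast h1) (by exact_mod_cast h2) (by linarith)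

lemma one_le_of_one_le_log_natCast {r : ℕ} (h : 1 ≤ log r) : 1 ≤ r := by
  by_contra! h0
  rw [Nat.lt_one_iff.mp h0, Nat.cast_zero, log_zero] at h
  linarith

lemma add_sub_le_of_lt_succ {s : ℕ → ℕ} {a b : ℕ} (hab : a ≤ b)
    (hs : ∀ k, a ≤ k → k < b → s k < s (k + 1)) : s a + (b - a) ≤ s b := by
  induction b, hab using Nat.le_induction with
  | base => simp
  | succ b hab ih =>
    have := ih fun k hk hkb => hs k hk (by omega)
    have := hs b hab (by omega)
    omega

section SamplingTimes

variable {Ω : Type*} (Z : ℕ → Ω → ℕ) (t : ℕ) (ω : Ω)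

lemma Tidx_le_Tidx {l l' : ℕ} (hl : l ≤ l') (hl' : l' ≤ sampCount Z t ω) :
    Tidx Z t l ω ≤ Tidx Z t l' ω := by
  obtain rfl | hl'0 := Nat.eq_zero_or_pos l'
  · rw [Nat.le_zero.mp hl]
  have hlen : (((Icc 1 t).filter (fun j => Z j ω = 1)).sort (· ≤ ·)).length
      = sampCount Z t ω := length_sort _
  unfold Tidx
  rw [List.getD_eq_getElem _ _ (by omega), List.getD_eq_getElem _ _ (by omega)]
  rcases (Nat.sub_le_sub_right hl 1).eq_or_lt with h | h
  · simp only [h, le_refl]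
  · exact List.pairwise_iff_getElem.mp (pairwise_sort _ _) _ _ _ _ h

lemma exists_Tidx_eq {j : ℕ} (hj : j ∈ (Icc 1 t).filter (fun j => Z j ω = 1)) :
    ∃ l, 1 ≤ l ∧ l ≤ sampCount Z t ω ∧ Tidx Z t l ω = j := by
  obtain ⟨i, hi, rfl⟩ := List.mem_iff_getElem.mp ((mem_sort (· ≤ ·)).mpr hj)
  refine ⟨i + 1, by omega, ?_, List.getD_eq_getElem _ _ hi⟩
  rw [length_sort] at hi
  exact hi

lemma card_filter_le_Lidx_sub_Uidx (s : ℕ → ℕ) (γ : ℝ) (k : ℕ) (I : Finset ℕ)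
    (hI : ∀ j ∈ I, j ∈ Icc 1 t ∧ s (k + 1) ≤ j ∧ (j : ℝ) < s (k + 1) + (t : ℝ) ^ γ)
    (hJ : ∃ j ∈ Icc 1 t, Z j ω = 1 ∧ (s (k + 1) : ℝ) + (t : ℝ) ^ γ ≤ j) :
    (I.filter fun j => Z j ω = 1).card ≤ Lidx Z s t γ (k + 1) ω - Uidx Z s t k ω - 1 := by
  set U := Uidx Z s t k ω
  set L := Lidx Z s t γ (k + 1) ω
  have hL : L ≤ sampCount Z t ω ∧ (s (k + 1) : ℝ) + (t : ℝ) ^ γ ≤ Tidx Z t L ω := by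
    obtain ⟨j, hj, hZj, hjge⟩ := hJ
    obtain ⟨l, hl1, hln, rfl⟩ := exists_Tidx_eq Z t ω (mem_filter.mpr ⟨hj, hZj⟩)
    exact (Nat.sInf_mem (s := {l | 1 ≤ l ∧ l ≤ sampCount Z t ω ∧
      (s (k + 1) : ℝ) + (t : ℝ) ^ γ ≤ Tidx Z t l ω}) ⟨l, hl1, hln, hjge⟩).2
  have hU : U = 0 ∨ (U ≤ sampCount Z t ω ∧ Tidx Z t U ω ≤ s (k + 1) - 1) := by
    rcases Set.eq_empty_or_nonempty
      {l | 1 ≤ l ∧ l ≤ sampCount Z t ω ∧ Tidx Z t l ω ≤ s (k + 1) - 1} with h | h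
    · left
      simp only [U, Uidx, h, csSup_empty, bot_eq_zero']
    · exact Or.inr (Nat.sSup_mem h ⟨sampCount Z t ω, fun l hl => hl.2.1⟩).2
  have hsub : I.filter (fun j => Z j ω = 1) ⊆ (Ioo U L).image (fun l => Tidx Z t l ω) := by
    intro j hj
    obtain ⟨hjI, hZj⟩ := mem_filter.mp hj
    obtain ⟨hjt, hjs, hjlt⟩ := hI j hjI
    obtain ⟨l, hl1, hln, rfl⟩ := exists_Tidx_eq Z t ω (mem_filter.mpr ⟨hjt, hZj⟩)
    refine mem_image.mpr ⟨l, mem_Ioo.mpr ⟨?_, ?_⟩, rfl⟩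
    · rcases hU with hU | ⟨hUn, hUT⟩
      · omega
      · by_contra! hle
        have := Tidx_le_Tidx Z t ω hle hUn
        have := (mem_Icc.mp hjt).1
        omega
    · by_contra! hle
      have : (Tidx Z t L ω : ℝ) ≤ Tidx Z t l ω := by exact_mod_cast Tidx_le_Tidx Z t ω hle hln
      linarith [hL.2]
  have := (card_le_card hsub).trans card_image_le
  rwa [Nat.card_Ioo] at this

lemma half_le_Lidx_sub_Uidx (hZ01 : ∀ j ω, Z j ω = 0 ∨ Z j ω = 1) {s : ℕ → ℕ} {k n : ℕ}
    {γ T : ℝ} (hT : 0 ≤ T) (hn : (t : ℝ) ^ γ ≤ n) (hn' : (n : ℝ) < (t : ℝ) ^ γ + 1)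
    (hs1 : 1 ≤ s (k + 1)) (hst : s (k + 1) + n + n ≤ t + 1)
    (hI : T / 2 < ∑ j ∈ Ico (s (k + 1)) (s (k + 1) + n), (Z j ω : ℝ))
    (hJ : 1 / 2 < ∑ j ∈ Ico (s (k + 1) + n) (s (k + 1) + n + n), (Z j ω : ℝ)) :
    T / 2 ≤ (Lidx Z s t γ (k + 1) ω : ℝ) - Uidx Z s t k ω := by
  set I := Ico (s (k + 1)) (s (k + 1) + n)
  set J := Ico (s (k + 1) + n) (s (k + 1) + n + n)
  rw [← natCast_card_filter_eq_sum hZ01] at hI hJ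
  have hIpos : 0 < (I.filter fun j => Z j ω = 1).card := by
    exact_mod_cast (show (0 : ℝ) < (I.filter fun j => Z j ω = 1).card by linarith)
  have hJpos : 0 < (J.filter fun j => Z j ω = 1).card := by
    exact_mod_cast (show (0 : ℝ) < (J.filter fun j => Z j ω = 1).card by linarith)
  obtain ⟨j, hj⟩ := card_pos.mp hJpos
  obtain ⟨hjJ, hZj⟩ := mem_filter.mp hj
  obtain ⟨hj1, hj2⟩ := mem_Ico.mp hjJ
  have hcard := card_filter_le_Lidx_sub_Uidx Z t ω s γ k I
    (fun i hi => by
      obtain ⟨hi1, hi2⟩ := mem_Ico.mp hi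
      refine ⟨mem_Icc.mpr ⟨by omega, by omega⟩, hi1, ?_⟩
      have : ((i + 1 : ℕ) : ℝ) ≤ (s (k + 1) + n : ℕ) := by exact_mod_cast hi2
      push_cast at this
      linarith)
    ⟨j, mem_Icc.mpr ⟨by omega, by omega⟩, hZj, by
      have : ((s (k + 1) + n : ℕ) : ℝ) ≤ j := by exact_mod_cast hj1
      push_cast at this
      linarith⟩
  have hLU : ((I.filter fun j => Z j ω = 1).card : ℝ) + Uidx Z s t k ω + 1
      ≤ Lidx Z s t γ (k + 1) ω := by
    exact_mod_cast (by omega)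
  linarith

end SamplingTimes

section Events

variable {Ω : Type*} {m : MeasurableSpace Ω} {μ : Measure Ω} {Z : ℕ → Ω → ℕ}

def sampCountNearMean (Z : ℕ → Ω → ℕ) (β : ℝ) (r : ℕ) : Set Ω :=
  {ω | (∑ j ∈ Icc 1 r, (j : ℝ) ^ (-β)) * (1 - 1 / log r) ≤ (sampCount Z r ω : ℝ) ∧
    (sampCount Z r ω : ℝ) ≤ (∑ j ∈ Icc 1 r, (j : ℝ) ^ (-β)) * (1 + 1 / log r)}

def expEvent (Z : ℕ → Ω → ℕ) (β : ℝ) (t : ℕ) : Set Ω :=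
  {ω | ∀ r : ℕ, (log t) ^ (2 / (1 - β)) ≤ (r : ℝ) → r ≤ t → ω ∈ sampCountNearMean Z β r}

def diffEvent (Z : ℕ → Ω → ℕ) (s : ℕ → ℕ) (t : ℕ) (γ β : ℝ) (M : ℕ) : Set Ω :=
  {ω | ∀ k : ℕ, 1 ≤ k → k + 1 < M →
    (t : ℝ) ^ (γ - β) / 2 ≤ (Lidx Z s t γ (k + 1) ω : ℝ) - (Uidx Z s t k ω : ℝ)}

lemma sum_measureReal_eq_sum_rpow_neg {β : ℝ}
    (hZp : ∀ j : ℕ, 1 ≤ j → μ {ω | Z j ω = 1} = ENNReal.ofReal ((j : ℝ) ^ (-β)))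
    {S : Finset ℕ} (hS : ∀ j ∈ S, 1 ≤ j) :
    ∑ j ∈ S, μ.real {ω | Z j ω = 1} = ∑ j ∈ S, (j : ℝ) ^ (-β) :=
  sum_congr rfl fun j hj => by
    rw [measureReal_def, hZp j (hS j hj), ENNReal.toReal_ofReal (by positivity)]

lemma measure_compl_sampCountNearMean_le (hZm : ∀ j, Measurable (Z j))
    (hZ01 : ∀ j ω, Z j ω = 0 ∨ Z j ω = 1) (hZind : iIndepFun Z μ) {β : ℝ} (hβ : 0 ≤ β)
    (hZp : ∀ j : ℕ, 1 ≤ j → μ {ω | Z j ω = 1} = ENNReal.ofReal ((j : ℝ) ^ (-β)))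
    {r : ℕ} {b : ℝ} (hr : 1 ≤ log r) (hb : 4 * b * (log r) ^ 2 ≤ (r : ℝ) ^ (1 - β)) :
    μ (sampCountNearMean Z β r)ᶜ ≤ ENNReal.ofReal (2 * exp (-b)) := by
  have hr0 : (0 : ℝ) < r := by exact_mod_cast one_le_of_one_le_log_natCast hr
  have hmean : (r : ℝ) ^ (1 - β) ≤ ∑ j ∈ Icc 1 r, (j : ℝ) ^ (-β) := by
    calc (r : ℝ) ^ (1 - β) = ((Icc 1 r).card : ℝ) * (r : ℝ) ^ (-β) := by
          rw [Nat.card_Icc, add_tsub_cancel_right, sub_eq_add_neg, rpow_add hr0, rpow_one]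
      _ ≤ _ := card_mul_rpow_neg_le_sum hβ subset_rfl
  have hδ : 0 < 1 / log r := by positivity
  have hdev := measure_sum_notMem_Icc_le hZm hZ01 hZind (Icc 1 r) hδ.le
    ((div_le_one (by linarith)).mpr hr)
  rw [sum_measureReal_eq_sum_rpow_neg hZp fun j hj => (mem_Icc.mp hj).1] at hdev
  rw [sampCountNearMean, Set.compl_ofPred]
  simp_rw [sampCount, natCast_card_filter_eq_sum hZ01]
  refine hdev.trans (ENNReal.ofReal_le_ofReal ?_)
  gcongr
  rw [div_pow, one_pow, le_div_iff₀ (by norm_num), mul_one_div, le_div_iff₀ (by positivity)]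
  linarith

lemma measure_compl_expEvent_le (hZm : ∀ j, Measurable (Z j))
    (hZ01 : ∀ j ω, Z j ω = 0 ∨ Z j ω = 1) (hZind : iIndepFun Z μ) {β : ℝ} (hβ : 0 ≤ β)
    (hZp : ∀ j : ℕ, 1 ≤ j → μ {ω | Z j ω = 1} = ENNReal.ofReal ((j : ℝ) ^ (-β)))
    {t : ℕ} {b : ℝ} (hb : ∀ r : ℕ, (log t) ^ (2 / (1 - β)) ≤ r →
      1 ≤ log r ∧ 4 * b * (log r) ^ 2 ≤ (r : ℝ) ^ (1 - β)) :
    μ (expEvent Z β t)ᶜ ≤ ENNReal.ofReal (t * (2 * exp (-b))) := by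
  classical
  set R := (Icc 1 t).filter fun r : ℕ => (log t) ^ (2 / (1 - β)) ≤ r
  have hsub : (expEvent Z β t)ᶜ ⊆ ⋃ r ∈ R, (sampCountNearMean Z β r)ᶜ := by
    intro ω hω
    simp only [expEvent, Set.mem_compl_iff, Set.mem_ofPred_eq, not_forall] at hω
    obtain ⟨r, hr, hrt, hω⟩ := hω
    have hr1 := one_le_of_one_le_log_natCast (hb r hr).1
    exact Set.mem_biUnion (mem_filter.mpr ⟨mem_Icc.mpr ⟨hr1, hrt⟩, hr⟩) hω
  calc μ (expEvent Z β t)ᶜ ≤ ∑ r ∈ R, μ (sampCountNearMean Z β r)ᶜ :=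
        (measure_mono hsub).trans (measure_biUnion_finset_le _ _)
    _ ≤ R.card • ENNReal.ofReal (2 * exp (-b)) := sum_le_card_nsmul _ _ _ fun r hr =>
        measure_compl_sampCountNearMean_le hZm hZ01 hZind hβ hZp (hb r (mem_filter.mp hr).2).1
          (hb r (mem_filter.mp hr).2).2
    _ ≤ t • ENNReal.ofReal (2 * exp (-b)) := by
        gcongr
        exact (card_filter_le _ _).trans (Nat.card_Icc 1 t).le
    _ = ENNReal.ofReal (t * (2 * exp (-b))) := by
        rw [nsmul_eq_mul, ENNReal.ofReal_mul t.cast_nonneg, ENNReal.ofReal_natCast]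

lemma measure_sum_Ico_le_le (hZm : ∀ j, Measurable (Z j))
    (hZ01 : ∀ j ω, Z j ω = 0 ∨ Z j ω = 1) (hZind : iIndepFun Z μ) {β γ : ℝ} (hβ : 0 ≤ β)
    (hZp : ∀ j : ℕ, 1 ≤ j → μ {ω | Z j ω = 1} = ENNReal.ofReal ((j : ℝ) ^ (-β)))
    {t x n : ℕ} (ht : 0 < t) (hx : 1 ≤ x) (hxn : x + n ≤ t + 1) (hn : (t : ℝ) ^ γ ≤ n)
    {c : ℝ} (hc : c ≤ (t : ℝ) ^ (γ - β) / 2) :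
    μ {ω | ∑ j ∈ Ico x (x + n), (Z j ω : ℝ) ≤ c}
      ≤ ENNReal.ofReal (exp (-((t : ℝ) ^ (γ - β) / 8))) := by
  have hsub : Ico x (x + n) ⊆ Icc 1 t := fun j hj => by
    simp only [mem_Ico, mem_Icc] at hj ⊢
    omega
  refine measure_sum_le_half_le hZm hZ01 hZind _ (by positivity) ?_ hc
  rw [sum_measureReal_eq_sum_rpow_neg hZp fun j hj => (mem_Icc.mp (hsub hj)).1]
  calc (t : ℝ) ^ (γ - β) = (t : ℝ) ^ γ * (t : ℝ) ^ (-β) := by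
        rw [sub_eq_add_neg, rpow_add (by exact_mod_cast ht)]
    _ ≤ (Ico x (x + n)).card * (t : ℝ) ^ (-β) := by
        rw [Nat.card_Ico, add_tsub_cancel_left]
        gcongr
    _ ≤ _ := card_mul_rpow_neg_le_sum hβ hsub

lemma measure_compl_diffEvent_le (hZm : ∀ j, Measurable (Z j))
    (hZ01 : ∀ j ω, Z j ω = 0 ∨ Z j ω = 1) (hZind : iIndepFun Z μ) {β γ γ0 : ℝ} (hβ : 0 ≤ β)
    (hβγ : β ≤ γ) (hZp : ∀ j : ℕ, 1 ≤ j → μ {ω | Z j ω = 1} = ENNReal.ofReal ((j : ℝ) ^ (-β)))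
    {t M : ℕ} {s : ℕ → ℕ} (ht : 0 < t) (hγ : 2 * (t : ℝ) ^ γ + 1 ≤ (t : ℝ) ^ γ0)
    (hsM : s M = t) (hsmono : ∀ k : ℕ, 1 ≤ k → k < M → s k < s (k + 1))
    (hgap : ∀ k : ℕ, 1 ≤ k → k < M → (t : ℝ) ^ γ0 ≤ (s (k + 1) : ℝ) - (s k : ℝ)) :
    μ (diffEvent Z s t γ β M)ᶜ ≤ ENNReal.ofReal (t * (2 * exp (-((t : ℝ) ^ (γ - β) / 8)))) := by
  set T := (t : ℝ) ^ (γ - β)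
  set n := ⌈(t : ℝ) ^ γ⌉₊
  have hn : (t : ℝ) ^ γ ≤ n := Nat.le_ceil _
  have hn' : (n : ℝ) < (t : ℝ) ^ γ + 1 := Nat.ceil_lt_add_one (by positivity)
  have hT : 1 ≤ T := one_le_rpow (by exact_mod_cast ht) (by linarith)
  set bad : ℕ → Set Ω := fun k =>
    {ω | ∑ j ∈ Ico (s (k + 1)) (s (k + 1) + n), (Z j ω : ℝ) ≤ T / 2} ∪
      {ω | ∑ j ∈ Ico (s (k + 1) + n) (s (k + 1) + n + n), (Z j ω : ℝ) ≤ 1 / 2}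
  have hblock (k : ℕ) (hk : 1 ≤ k) (hkM : k + 1 < M) :
      1 ≤ s (k + 1) ∧ s (k + 1) + n + n ≤ t + 1 := by
    have hs := add_sub_le_of_lt_succ (a := k + 2) (b := M) (by omega)
      fun i hi hiM => hsmono i (by omega) hiM
    have hsk : (s (k + 2) : ℝ) ≤ t := by exact_mod_cast (by omega : s (k + 2) ≤ t)
    have := hgap (k + 1) (by omega) hkM
    refine ⟨by have := hsmono k hk (by omega); omega, ?_⟩
    exact_mod_cast (show (s (k + 1) : ℝ) + n + n ≤ t + 1 by linarith)
  have hsub : (diffEvent Z s t γ β M)ᶜ ⊆ ⋃ k ∈ Ioo 0 (M - 1), bad k := by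
    intro ω hω
    simp only [diffEvent, Set.mem_compl_iff, Set.mem_ofPred_eq, not_forall] at hω
    obtain ⟨k, hk, hkM, hω⟩ := hω
    refine Set.mem_biUnion (mem_Ioo.mpr ⟨hk, by omega⟩) ?_
    by_contra hgood
    simp only [bad, Set.mem_union, Set.mem_ofPred_eq, not_or, not_le] at hgood
    exact hω (half_le_Lidx_sub_Uidx Z t ω hZ01 (by positivity) hn hn' (hblock k hk hkM).1
      (hblock k hk hkM).2 hgood.1 hgood.2)
  have hM : M - 2 ≤ t := by
    rcases Nat.eq_zero_or_pos M with rfl | hM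
    · simp
    · have := add_sub_le_of_lt_succ hM hsmono
      omega
  calc μ (diffEvent Z s t γ β M)ᶜ ≤ ∑ k ∈ Ioo 0 (M - 1), μ (bad k) :=
        (measure_mono hsub).trans (measure_biUnion_finset_le _ _)
    _ ≤ (Ioo 0 (M - 1)).card • ENNReal.ofReal (2 * exp (-(T / 8))) :=
        sum_le_card_nsmul _ _ _ fun k hk => by
          obtain ⟨hk, hkM⟩ := mem_Ioo.mp hk
          obtain ⟨h1, h2⟩ := hblock k hk (by omega)
          rw [two_mul, ENNReal.ofReal_add (by positivity) (by positivity)]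
          exact (measure_union_le _ _).trans (add_le_add
            (measure_sum_Ico_le_le hZm hZ01 hZind hβ hZp ht h1 (by omega) hn le_rfl)
            (measure_sum_Ico_le_le hZm hZ01 hZind hβ hZp ht (by omega) (by omega) hn
              (by linarith)))
    _ ≤ t • ENNReal.ofReal (2 * exp (-(T / 8))) := by
        gcongr
        rw [Nat.card_Ioo]
        omega
    _ = ENNReal.ofReal (t * (2 * exp (-(T / 8)))) := by
        rw [nsmul_eq_mul, ENNReal.ofReal_mul t.cast_nonneg, ENNReal.ofReal_natCast]

end Events

section Asymptotics

lemma tendsto_log_natCast_atTop : Tendsto (fun t : ℕ => log t) atTop atTop :=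
  tendsto_log_atTop.comp tendsto_natCast_atTop_atTop

lemma eventually_log_sq_le_rpow {c : ℝ} (hc : 0 < c) :
    ∀ᶠ r : ℝ in atTop, 1 ≤ log r ∧ 4 * (log r) ^ 2 ≤ r ^ c := by
  filter_upwards [tendsto_log_atTop.eventually_ge_atTop 1, eventually_gt_atTop 0,
    (isLittleO_log_rpow_rpow_atTop 2 hc).bound (by norm_num : (0 : ℝ) < 1 / 4)]
    with r hr1 hr0 hr
  rw [norm_of_nonneg (by positivity), norm_of_nonneg (by positivity), rpow_two] at hr
  exact ⟨hr1, by linarith⟩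

lemma eventually_four_mul_log_rpow_mul_log_sq_le {β : ℝ} (hβ : β < 1) :
    ∀ᶠ t : ℕ in atTop, ∀ r : ℕ, (log t) ^ (2 / (1 - β)) ≤ r →
      1 ≤ log r ∧ 4 * (log t) ^ ((7 : ℝ) / 4) * (log r) ^ 2 ≤ (r : ℝ) ^ (1 - β) := by
  obtain ⟨R, hR⟩ :=
    eventually_atTop.mp (eventually_log_sq_le_rpow (c := (1 - β) / 8) (by linarith))
  filter_upwards [tendsto_log_natCast_atTop.eventually_ge_atTop 0,
    ((tendsto_rpow_atTop (by bound : 0 < 2 / (1 - β))).comp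
      tendsto_log_natCast_atTop).eventually_ge_atTop R] with t ht0 htR r hr
  obtain ⟨hr1, hrc⟩ := hR r (htR.trans hr)
  have hβ' : 1 - β ≠ 0 := (sub_pos.mpr hβ).ne'
  have h78 : (log t) ^ ((7 : ℝ) / 4) ≤ (r : ℝ) ^ ((1 - β) * (7 / 8)) := by
    calc (log t) ^ ((7 : ℝ) / 4) = ((log t) ^ (2 / (1 - β))) ^ ((1 - β) * (7 / 8)) := by
          rw [← rpow_mul ht0]
          congr 1
          field_simp
          ring
      _ ≤ _ := rpow_le_rpow (by positivity) hr (by nlinarith)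
  refine ⟨hr1, ?_⟩
  calc 4 * (log t) ^ ((7 : ℝ) / 4) * (log r) ^ 2
      = (log t) ^ ((7 : ℝ) / 4) * (4 * (log r) ^ 2) := by ring
    _ ≤ (r : ℝ) ^ ((1 - β) * (7 / 8)) * (r : ℝ) ^ ((1 - β) / 8) :=
        mul_le_mul h78 hrc (by positivity) (by positivity)
    _ = (r : ℝ) ^ (1 - β) := by
        rw [← rpow_add' r.cast_nonneg (by nlinarith)]
        ring_nf

lemma eventually_mul_two_mul_exp_le :
    ∀ᶠ t : ℕ in atTop, (t : ℝ) * (2 * exp (-(log t) ^ ((7 : ℝ) / 4)))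
      ≤ exp (-(log t) ^ ((3 : ℝ) / 2)) := by
  filter_upwards [eventually_gt_atTop 0, tendsto_log_natCast_atTop.eventually_ge_atTop 1,
    ((tendsto_rpow_atTop (by norm_num : (0 : ℝ) < 1 / 4)).comp
      tendsto_log_natCast_atTop).eventually_ge_atTop 3] with t ht hL1 hL3
  set L := log t
  have hL3' : 3 ≤ L ^ ((1 : ℝ) / 4) := hL3
  have h32 : L ≤ L ^ ((3 : ℝ) / 2) := by
    simpa using rpow_le_rpow_of_exponent_le hL1 (by norm_num : (1 : ℝ) ≤ 3 / 2)
  have h74 : L ^ ((7 : ℝ) / 4) = L ^ ((3 : ℝ) / 2) * L ^ ((1 : ℝ) / 4) := by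
    rw [← rpow_add (by linarith)]
    norm_num
  have hlog2 : log 2 ≤ 1 := by linarith [log_two_lt_d9]
  calc (t : ℝ) * (2 * exp (-L ^ ((7 : ℝ) / 4))) = exp (L + log 2 - L ^ ((7 : ℝ) / 4)) := by
        rw [exp_sub, exp_add, exp_log (by exact_mod_cast ht), exp_log two_pos, exp_neg]
        ring
    _ ≤ exp (-L ^ ((3 : ℝ) / 2)) := exp_le_exp.mpr (by
          rw [h74]
          nlinarith [mul_le_mul_of_nonneg_left hL3' (by linarith : 0 ≤ L ^ ((3 : ℝ) / 2))])

lemma eventually_two_mul_rpow_add_one_le {γ γ0 : ℝ} (hγ : 0 ≤ γ) (hγγ0 : γ < γ0) :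
    ∀ᶠ t : ℕ in atTop, 2 * (t : ℝ) ^ γ + 1 ≤ (t : ℝ) ^ γ0 := by
  filter_upwards [eventually_gt_atTop 0, ((tendsto_rpow_atTop (sub_pos.mpr hγγ0)).comp
    tendsto_natCast_atTop_atTop).eventually_ge_atTop 3] with t ht h3
  have h3' : 3 ≤ (t : ℝ) ^ (γ0 - γ) := h3
  have h1 : 1 ≤ (t : ℝ) ^ γ := one_le_rpow (by exact_mod_cast ht) hγ
  rw [show γ0 = γ + (γ0 - γ) by ring, rpow_add (by exact_mod_cast ht)]
  nlinarith

lemma eventually_two_mul_exp_le {β γ : ℝ} (hβγ : β < γ) :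
    ∀ᶠ t : ℕ in atTop,
      2 * exp (-((t : ℝ) ^ (γ - β) / 8)) ≤ exp (-(1 / 16) * (t : ℝ) ^ (γ - β)) := by
  filter_upwards [((tendsto_rpow_atTop (sub_pos.mpr hβγ)).comp
    tendsto_natCast_atTop_atTop).eventually_ge_atTop (16 * log 2)] with t ht
  have ht' : 16 * log 2 ≤ (t : ℝ) ^ (γ - β) := ht
  rw [← exp_log two_pos, ← exp_add]
  exact exp_le_exp.mpr (by linarith)

end Asymptotics

theorem exp_and_diff_event_bound_general
    (γ0 β γ : ℝ) (hγ01 : γ0 ≤ 1)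
    (hβ0 : 0 < β) (hβγ : β < γ) (hγγ0 : γ < γ0) :
    ∃ C : ℝ, 0 < C ∧ ∃ t0 : ℕ, ∀ t : ℕ, t0 ≤ t →
      ∀ (Ω : Type) (_ : MeasureSpace Ω), IsProbabilityMeasure (ℙ : Measure Ω) →
      ∀ (M : ℕ) (s : ℕ → ℕ) (Z : ℕ → Ω → ℕ),
        2 ≤ M → s 1 = 1 → s M = t →
        (∀ k : ℕ, 1 ≤ k → k < M → s k < s (k + 1)) →
        (∀ k : ℕ, 1 ≤ k → k < M → (t : ℝ) ^ γ0 ≤ (s (k + 1) : ℝ) - (s k : ℝ)) →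
        (∀ j, Measurable (Z j)) →
        (∀ j, ∀ ω, Z j ω = 0 ∨ Z j ω = 1) →
        (∀ j : ℕ, 1 ≤ j → ℙ {ω | Z j ω = 1} = ENNReal.ofReal ((j : ℝ) ^ (-β))) →
        iIndepFun Z ℙ →
        1 - ENNReal.ofReal (Real.exp (-(Real.log t) ^ ((3 : ℝ) / 2)))
            - ENNReal.ofReal ((t : ℝ) * Real.exp (-C * (t : ℝ) ^ (γ - β)))
          ≤ ℙ ({ω | ∀ r : ℕ, (Real.log t) ^ (2 / (1 - β)) ≤ (r : ℝ) → r ≤ t →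
                  (∑ j ∈ Finset.Icc 1 r, (j : ℝ) ^ (-β)) * (1 - 1 / Real.log r)
                      ≤ (sampCount Z r ω : ℝ) ∧
                    (sampCount Z r ω : ℝ)
                      ≤ (∑ j ∈ Finset.Icc 1 r, (j : ℝ) ^ (-β)) * (1 + 1 / Real.log r)}
              ∩ {ω | ∀ k : ℕ, 1 ≤ k → k + 1 < M →
                  (t : ℝ) ^ (γ - β) / 2
                    ≤ (Lidx Z s t γ (k + 1) ω : ℝ) - (Uidx Z s t k ω : ℝ)}) := by
  refine ⟨1 / 16, by norm_num, ?_⟩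
  obtain ⟨t0, ht0⟩ := eventually_atTop.mp <|
    (eventually_four_mul_log_rpow_mul_log_sq_le (by linarith : β < 1)).and <|
      eventually_mul_two_mul_exp_le.and <| (eventually_gt_atTop 0).and <|
        (eventually_two_mul_rpow_add_one_le (by linarith) hγγ0).and (eventually_two_mul_exp_le hβγ)
  refine ⟨t0, fun t ht Ω _ _ M s Z _ _ hsM hsmono hgap hZm hZ01 hZp hZind => ?_⟩
  obtain ⟨hexp, hexp', ht, hdiff, hdiff'⟩ := ht0 t ht
  calc _ ≤ 1 - ℙ (expEvent Z β t)ᶜ - ℙ (diffEvent Z s t γ β M)ᶜ := by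
        gcongr
        · exact (measure_compl_expEvent_le hZm hZ01 hZind hβ0.le hZp hexp).trans
            (ENNReal.ofReal_le_ofReal hexp')
        · exact (measure_compl_diffEvent_le hZm hZ01 hZind hβ0.le hβγ.le hZp ht hdiff hsM hsmono
            hgap).trans (ENNReal.ofReal_le_ofReal (by gcongr))
    _ ≤ _ := one_sub_sub_le_measure_inter _ _

/-- Suppose `min_k (s_{k+1} − s_k) ≥ t^{γ0}` and fix `0 < β < γ < γ0`. With
`E_exp` the event that `a(1,r)(1 − 1/log r) ≤ #E(r) ≤ a(1,r)(1 + 1/log r)` for all integers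
`(log t)^{2/(1−β)} ≤ r ≤ t` and `E_diff = ∩_k {L_{k+1} − U_k ≥ t^{γ−β}/2}`, there is a
constant `C > 0` such that for all sufficiently large `t`,
`P(E_exp ∩ E_diff) ≥ 1 − exp(−(log t)^{3/2}) − t·exp(−C·t^{γ−β})`. -/
theorem exp_and_diff_event_bound
    (γ0 β γ : ℝ) (hγ00 : 0 < γ0) (hγ01 : γ0 ≤ 1)
    (hβ0 : 0 < β) (hβγ : β < γ) (hγγ0 : γ < γ0) :
    ∃ C : ℝ, 0 < C ∧ ∃ t0 : ℕ, ∀ t : ℕ, t0 ≤ t →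
      ∀ (Ω : Type) (_ : MeasureSpace Ω), IsProbabilityMeasure (ℙ : Measure Ω) →
      ∀ (M : ℕ) (s : ℕ → ℕ) (Z : ℕ → Ω → ℕ),
        2 ≤ M → s 1 = 1 → s M = t →
        (∀ k : ℕ, 1 ≤ k → k < M → s k < s (k + 1)) →
        (∀ k : ℕ, 1 ≤ k → k < M → (t : ℝ) ^ γ0 ≤ (s (k + 1) : ℝ) - (s k : ℝ)) →
        (∀ j, Measurable (Z j)) →
        (∀ j, ∀ ω, Z j ω = 0 ∨ Z j ω = 1) →
        (∀ j : ℕ, 1 ≤ j → ℙ {ω | Z j ω = 1} = ENNReal.ofReal ((j : ℝ) ^ (-β))) →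
        iIndepFun Z ℙ →
        1 - ENNReal.ofReal (Real.exp (-(Real.log t) ^ ((3 : ℝ) / 2)))
            - ENNReal.ofReal ((t : ℝ) * Real.exp (-C * (t : ℝ) ^ (γ - β)))
          ≤ ℙ ({ω | ∀ r : ℕ, (Real.log t) ^ (2 / (1 - β)) ≤ (r : ℝ) → r ≤ t →
                  (∑ j ∈ Finset.Icc 1 r, (j : ℝ) ^ (-β)) * (1 - 1 / Real.log r)
                      ≤ (sampCount Z r ω : ℝ) ∧
                    (sampCount Z r ω : ℝ)
                      ≤ (∑ j ∈ Finset.Icc 1 r, (j : ℝ) ^ (-β)) * (1 + 1 / Real.log r)}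
              ∩ {ω | ∀ k : ℕ, 1 ≤ k → k + 1 < M →
                  (t : ℝ) ^ (γ - β) / 2
                    ≤ (Lidx Z s t γ (k + 1) ω : ℝ) - (Uidx Z s t k ω : ℝ)}) :=
  exp_and_diff_event_bound_general γ0 β γ hγ01 hβ0 hβγ hγγ0
end

section
/- Let 0 < δ < 1, α_1 = 0 and α_l = 1 − l^{−δ} for l ≥ 2, and θ_{j,l} = (1−α_j)·Π_{i=j+1}^{l} α_i (with θ_{l,l} = 1−α_l). Let w_1, …, w_l be real numbers with 0 ≤ w_j ≤ 1 for all j, and suppose there is an integer 0 ≤ u < l and a number m ∈ [0,1] with w_j = m for all u < j ≤ l. Then |Σ_{j=1}^{l} θ_{j,l} w_j − m| ≤ Π_{j=u+1}^{l} α_j ≤ exp(−(l − u)/l^{δ}). -/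
open Finset Real

/-- The weight `α_l = 1 − l^{−δ}` (note `α_1 = 0`). -/
noncomputable def alphaWt (δ : ℝ) (l : ℕ) : ℝ := 1 - (l : ℝ) ^ (-δ)

/-- The expansion weight `θ_{j,l} = (1 − α_j)·Π_{i=j+1}^{l} α_i` (so `θ_{l,l} = 1 − α_l`). -/
noncomputable def thetaWt (δ : ℝ) (j l : ℕ) : ℝ :=
  (1 - alphaWt δ j) * ∏ i ∈ Finset.Icc (j + 1) l, alphaWt δ i

/-! The partial sums of `θ_{·,l}` telescope: `θ_{j,l} = P_j − P_{j−1}` with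
`P_v = Π_{i=v+1}^{l} α_i`, and `P_0 = 0` because `α_1 = 0`. Hence `Σ_{j ≤ u} θ_{j,l} = P_u`,
and `Σθ w − m = Σ_{j ≤ u} θ_{j,l} (w_j − m)` is bounded by `P_u` since `|w_j − m| ≤ 1`.
Finally `α_j ≤ α_l ≤ exp(−l^{−δ})` for `j ≤ l`. -/

theorem Finset.sum_Icc_one_sub_mul_prod_Icc {R : Type*} [CommRing R] (f : ℕ → R) {v l : ℕ}
    (hv : v ≤ l) :
    ∑ j ∈ Icc 1 v, (1 - f j) * ∏ i ∈ Icc (j + 1) l, f i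
      = ∏ i ∈ Icc (v + 1) l, f i - ∏ i ∈ Icc 1 l, f i := by
  induction v with
  | zero => simp
  | succ n ih =>
    have hstep : ∏ i ∈ Icc (n + 1) l, f i = f (n + 1) * ∏ i ∈ Icc (n + 1 + 1) l, f i := by
      rw [Icc_add_one_left_eq_Ioc (n + 1), mul_prod_Ioc_eq_prod_Icc hv]
    rw [sum_Icc_succ_top (by omega), ih (by omega), hstep]
    ring

theorem Finset.abs_sum_mul_sub_le_sum {ι : Type*} [DecidableEq ι] {s t : Finset ι} (hts : t ⊆ s)
    {θ w : ι → ℝ} {m : ℝ} (hθ : ∀ j ∈ s, 0 ≤ θ j) (hθsum : ∑ j ∈ s, θ j = 1)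
    (hwm : ∀ j ∈ s \ t, w j = m) (hw : ∀ j ∈ t, |w j - m| ≤ 1) :
    |∑ j ∈ s, θ j * w j - m| ≤ ∑ j ∈ t, θ j := by
  have hshift : ∑ j ∈ s, θ j * w j - m = ∑ j ∈ t, θ j * (w j - m) :=
    calc ∑ j ∈ s, θ j * w j - m = ∑ j ∈ s, θ j * (w j - m) := by
          simp only [mul_sub, sum_sub_distrib, ← sum_mul, hθsum, one_mul]
      _ = ∑ j ∈ t, θ j * (w j - m) := by
          rw [← sum_sdiff hts, sum_eq_zero fun j hj => by rw [hwm j hj, sub_self, mul_zero],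
            zero_add]
  rw [hshift]
  calc |∑ j ∈ t, θ j * (w j - m)| ≤ ∑ j ∈ t, |θ j * (w j - m)| := abs_sum_le_sum_abs _ _
    _ ≤ ∑ j ∈ t, θ j := sum_le_sum fun j hj => by
      rw [abs_mul, abs_of_nonneg (hθ j (hts hj))]
      exact mul_le_of_le_one_right (hθ j (hts hj)) (hw j hj)

theorem Finset.prod_le_exp_neg_card_mul {ι : Type*} {s : Finset ι} {f : ι → ℝ} {c : ℝ}
    (hf0 : ∀ i ∈ s, 0 ≤ f i) (hf : ∀ i ∈ s, f i ≤ 1 - c) :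
    ∏ i ∈ s, f i ≤ exp (-(#s * c)) :=
  calc ∏ i ∈ s, f i ≤ ∏ _i ∈ s, exp (-c) :=
        prod_le_prod hf0 fun i hi => (hf i hi).trans (by linarith [add_one_le_exp (-c)])
    _ = exp (-(#s * c)) := by rw [prod_const, ← exp_nat_mul, mul_neg]

section Weights

variable {δ : ℝ}

theorem alphaWt_one : alphaWt δ 1 = 0 := by simp [alphaWt]

theorem alphaWt_le_one (j : ℕ) : alphaWt δ j ≤ 1 := by
  simp only [alphaWt, sub_le_self_iff]
  positivity

theorem alphaWt_le_alphaWt (hδ : 0 ≤ δ) {j l : ℕ} (hj : 1 ≤ j) (hjl : j ≤ l) :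
    alphaWt δ j ≤ alphaWt δ l := by
  have hj' : (0 : ℝ) < j := by exact_mod_cast hj
  have hpow : (l : ℝ) ^ (-δ) ≤ (j : ℝ) ^ (-δ) :=
    rpow_le_rpow_of_nonpos hj' (by exact_mod_cast hjl) (neg_nonpos.mpr hδ)
  unfold alphaWt
  linarith

theorem alphaWt_nonneg (hδ : 0 ≤ δ) {j : ℕ} (hj : 1 ≤ j) : 0 ≤ alphaWt δ j :=
  alphaWt_one.symm.le.trans (alphaWt_le_alphaWt hδ le_rfl hj)

theorem thetaWt_nonneg (hδ : 0 ≤ δ) {j : ℕ} (l : ℕ) : 0 ≤ thetaWt δ j l :=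
  mul_nonneg (sub_nonneg.mpr (alphaWt_le_one j))
    (prod_nonneg fun i hi => alphaWt_nonneg hδ (by grind))

theorem sum_Icc_thetaWt {v l : ℕ} (hv : v ≤ l) (hl : 1 ≤ l) :
    ∑ j ∈ Icc 1 v, thetaWt δ j l = ∏ i ∈ Icc (v + 1) l, alphaWt δ i := by
  unfold thetaWt
  rw [sum_Icc_one_sub_mul_prod_Icc _ hv, prod_eq_zero (mem_Icc.mpr ⟨le_rfl, hl⟩) alphaWt_one,
    sub_zero]

end Weights

theorem expansion_weights_mean_shift_general (δ : ℝ) (hδ0 : 0 < δ)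
    (l u : ℕ) (hu : u < l) (w : ℕ → ℝ) (m : ℝ)
    (hw : ∀ j ∈ Finset.Icc 1 l, 0 ≤ w j ∧ w j ≤ 1)
    (hm0 : 0 ≤ m) (hm1 : m ≤ 1)
    (hwm : ∀ j : ℕ, u < j → j ≤ l → w j = m) :
    |(∑ j ∈ Finset.Icc 1 l, thetaWt δ j l * w j) - m|
        ≤ ∏ j ∈ Finset.Icc (u + 1) l, alphaWt δ j ∧
      ∏ j ∈ Finset.Icc (u + 1) l, alphaWt δ j
        ≤ Real.exp (-(((l : ℝ) - (u : ℝ)) / (l : ℝ) ^ δ)) := by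
  have hl : 1 ≤ l := by omega
  constructor
  · have hθsum : ∑ j ∈ Icc 1 l, thetaWt δ j l = 1 := by simp [sum_Icc_thetaWt le_rfl hl]
    rw [← sum_Icc_thetaWt hu.le hl]
    refine abs_sum_mul_sub_le_sum (Icc_subset_Icc_right hu.le)
      (fun j _ => thetaWt_nonneg hδ0.le l) hθsum (fun j hj => ?_) (fun j hj => ?_)
    · simp only [mem_sdiff, mem_Icc] at hj
      exact hwm j (by omega) hj.1.2
    · obtain ⟨hw0, hw1⟩ := hw j (Icc_subset_Icc_right hu.le hj)
      rw [abs_le]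
      constructor <;> linarith
  · calc ∏ j ∈ Icc (u + 1) l, alphaWt δ j ≤ exp (-(#(Icc (u + 1) l) * (l : ℝ) ^ (-δ))) :=
          prod_le_exp_neg_card_mul (fun j hj => alphaWt_nonneg hδ0.le (by grind))
            (fun j hj => alphaWt_le_alphaWt hδ0.le (by grind) (mem_Icc.mp hj).2)
      _ = exp (-(((l : ℝ) - u) / (l : ℝ) ^ δ)) := by
          rw [Nat.card_Icc, Nat.add_sub_add_right, Nat.cast_sub hu.le,
            rpow_neg (Nat.cast_nonneg l), div_eq_mul_inv]

/-- Let `0 < δ < 1` and let `w_1, …, w_l ∈ [0,1]` be such that `w_j = m` for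
all `u < j ≤ l`, where `0 ≤ u < l` and `m ∈ [0,1]`. Then
`|Σ_{j=1}^{l} θ_{j,l} w_j − m| ≤ Π_{j=u+1}^{l} α_j ≤ exp(−(l − u)/l^δ)`. -/
theorem expansion_weights_mean_shift (δ : ℝ) (hδ0 : 0 < δ) (hδ1 : δ < 1)
    (l u : ℕ) (hu : u < l) (w : ℕ → ℝ) (m : ℝ)
    (hw : ∀ j ∈ Finset.Icc 1 l, 0 ≤ w j ∧ w j ≤ 1)
    (hm0 : 0 ≤ m) (hm1 : m ≤ 1)
    (hwm : ∀ j : ℕ, u < j → j ≤ l → w j = m) :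
    |(∑ j ∈ Finset.Icc 1 l, thetaWt δ j l * w j) - m|
        ≤ ∏ j ∈ Finset.Icc (u + 1) l, alphaWt δ j ∧
      ∏ j ∈ Finset.Icc (u + 1) l, alphaWt δ j
        ≤ Real.exp (-(((l : ℝ) - (u : ℝ)) / (l : ℝ) ^ δ)) :=
  expansion_weights_mean_shift_general δ hδ0 l u hu w m hw hm0 hm1 hwm
end

section
/- Let 0 < δ < 1, α_1 = 0 and α_l = 1 − l^{−δ} for l ≥ 2, and let W_1, …, W_l be independent random variables with 0 ≤ W_j ≤ 1. Define Y_0 = 0 and Y_i = α_i Y_{i−1} + (1−α_i) W_i for 1 ≤ i ≤ l, and let ν_l = E Y_l. Then there exists a constant L_0 (depending only on δ) such that for all l ≥ L_0 and every ε > 0, P(|Y_l − ν_l| ≥ ε·ν_l) ≤ 2·exp(−ε² ν_l² l^{δ}/(5(log l)²)). -/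
open MeasureTheory ProbabilityTheory Finset Real
open scoped ProbabilityTheory

/-! Unrolling the recursion gives `Y_l = ∑_{j ≤ l} θ_{j,l} W_j`, a weighted sum of independent
`[0, 1]`-valued variables, so Hoeffding's inequality bounds the two-sided deviation probability by
`2 exp (-2 r² / ∑ θ_{j,l}²)`. Once `l` is large every weight is at most `2 l^{-δ}`: for `j ≥ l / 2`
because `θ_{j,l} ≤ j^{-δ}`, and for `j < l / 2` because the product of more than `l / 2` factors
`α_i ≤ 1 - l^{-δ}` is at most `exp (-l^{1-δ} / 2)`, which eventually drops below `l^{-δ}`. As the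
weights sum to at most `1`, this gives `∑ θ_{j,l}² ≤ 2 l^{-δ}`. -/

open Filter

section ExpansionWeight

variable (α : ℕ → ℝ)

noncomputable def expansionWeight (j l : ℕ) : ℝ :=
  (1 - α j) * ∏ i ∈ Icc (j + 1) l, α i

theorem expansionWeight_self (l : ℕ) : expansionWeight α l l = 1 - α l := by
  simp [expansionWeight]

theorem sum_expansionWeight_mul_succ (g : ℕ → ℝ) (l : ℕ) :
    ∑ j ∈ Icc 1 (l + 1), expansionWeight α j (l + 1) * g j
      = α (l + 1) * ∑ j ∈ Icc 1 l, expansionWeight α j l * g j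
        + (1 - α (l + 1)) * g (l + 1) := by
  rw [sum_Icc_succ_top (by omega), expansionWeight_self, mul_sum]
  congr 1
  refine sum_congr rfl fun j hj ↦ ?_
  rw [expansionWeight, expansionWeight,
    prod_Icc_succ_top (by linarith [(mem_Icc.1 hj).2])]
  ring

theorem eq_sum_expansionWeight_mul {Y W : ℕ → ℝ} (h0 : Y 0 = 0)
    (hrec : ∀ i, Y (i + 1) = α (i + 1) * Y i + (1 - α (i + 1)) * W (i + 1)) (l : ℕ) :
    Y l = ∑ j ∈ Icc 1 l, expansionWeight α j l * W j := by
  induction l with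
  | zero => simp [h0]
  | succ l ih => rw [hrec, ih, sum_expansionWeight_mul_succ]

theorem sum_expansionWeight (l : ℕ) :
    ∑ j ∈ Icc 1 l, expansionWeight α j l = 1 - ∏ i ∈ Icc 1 l, α i := by
  induction l with
  | zero => simp
  | succ l ih =>
    have h := sum_expansionWeight_mul_succ α 1 l
    simp only [Pi.one_apply, mul_one] at h
    rw [h, ih, prod_Icc_succ_top (by omega)]
    ring

variable {α}

theorem expansionWeight_nonneg (hα : ∀ i, α i ∈ Set.Icc 0 1) (j l : ℕ) :
    0 ≤ expansionWeight α j l :=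
  mul_nonneg (sub_nonneg.2 (hα j).2) (prod_nonneg fun i _ ↦ (hα i).1)

theorem expansionWeight_le_one_sub (hα : ∀ i, α i ∈ Set.Icc 0 1) (j l : ℕ) :
    expansionWeight α j l ≤ 1 - α j :=
  mul_le_of_le_one_right (sub_nonneg.2 (hα j).2)
    (prod_le_one (fun i _ ↦ (hα i).1) fun i _ ↦ (hα i).2)

theorem expansionWeight_le_prod (hα : ∀ i, α i ∈ Set.Icc 0 1) (j l : ℕ) :
    expansionWeight α j l ≤ ∏ i ∈ Icc (j + 1) l, α i :=
  mul_le_of_le_one_left (prod_nonneg fun i _ ↦ (hα i).1) (by linarith [(hα j).1])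

theorem sum_sq_expansionWeight_le (hα : ∀ i, α i ∈ Set.Icc 0 1) {l : ℕ} {c : ℝ} (hc : 0 ≤ c)
    (hθ : ∀ j ∈ Icc 1 l, expansionWeight α j l ≤ c) :
    ∑ j ∈ Icc 1 l, expansionWeight α j l ^ 2 ≤ c :=
  calc ∑ j ∈ Icc 1 l, expansionWeight α j l ^ 2
      ≤ ∑ j ∈ Icc 1 l, c * expansionWeight α j l :=
        sum_le_sum fun j hj ↦ by
          rw [sq]; exact mul_le_mul_of_nonneg_right (hθ j hj) (expansionWeight_nonneg hα j l)
    _ = c * (1 - ∏ i ∈ Icc 1 l, α i) := by rw [← mul_sum, sum_expansionWeight]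
    _ ≤ c := mul_le_of_le_one_right hc
        (sub_le_self _ (prod_nonneg fun i _ ↦ (hα i).1))

end ExpansionWeight

section Hoeffding

open scoped NNReal

theorem measure_abs_sum_sub_integral_ge_le {Ω ι : Type*} [MeasurableSpace Ω] {μ : Measure Ω}
    [IsProbabilityMeasure μ] {X : ι → Ω → ℝ} (hXm : ∀ i, AEMeasurable (X i) μ)
    (hind : iIndepFun X μ) {a b : ι → ℝ} (hX : ∀ i, ∀ᵐ ω ∂μ, X i ω ∈ Set.Icc (a i) (b i))
    (s : Finset ι) {r : ℝ} (hr : 0 ≤ r) :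
    μ {ω | r ≤ |∑ i ∈ s, X i ω - μ[fun ω ↦ ∑ i ∈ s, X i ω]|}
      ≤ ENNReal.ofReal (2 * exp (-2 * r ^ 2 / ∑ i ∈ s, (b i - a i) ^ 2)) := by
  set Z : Ω → ℝ := fun ω ↦ ∑ i ∈ s, (X i ω - μ[X i])
  have hcentered : iIndepFun (fun i ω ↦ X i ω - μ[X i]) μ :=
    hind.comp (fun i (x : ℝ) ↦ x - ∫ ω, X i ω ∂μ) fun _ ↦ by fun_prop
  have hZ : HasSubgaussianMGF Z (∑ i ∈ s, (‖b i - a i‖₊ / 2) ^ 2) μ :=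
    HasSubgaussianMGF.sum_of_iIndepFun hcentered fun i _ ↦
      hasSubgaussianMGF_of_mem_Icc (hXm i) (hX i)
  have hexp : -r ^ 2 / (2 * ((∑ i ∈ s, (‖b i - a i‖₊ / 2) ^ 2 : ℝ≥0) : ℝ))
      = -2 * r ^ 2 / ∑ i ∈ s, (b i - a i) ^ 2 := by
    push_cast
    simp only [norm_eq_abs, div_pow, sq_abs, ← sum_div]
    ring
  have hmean : μ[fun ω ↦ ∑ i ∈ s, X i ω] = ∑ i ∈ s, μ[X i] :=
    integral_finsetSum s fun i _ ↦ Integrable.of_mem_Icc _ _ (hXm i) (hX i)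
  have hsub : {ω | r ≤ |∑ i ∈ s, X i ω - μ[fun ω ↦ ∑ i ∈ s, X i ω]|}
      ⊆ {ω | r ≤ Z ω} ∪ {ω | r ≤ (-Z) ω} := fun ω hω ↦ by
    rw [Set.mem_ofPred_eq, hmean, le_abs] at hω
    simpa [Z, sum_sub_distrib] using hω
  rw [ENNReal.le_ofReal_iff_toReal_le (measure_ne_top _ _) (by positivity)]
  calc μ.real {ω | r ≤ |∑ i ∈ s, X i ω - μ[fun ω ↦ ∑ i ∈ s, X i ω]|}
      ≤ μ.real {ω | r ≤ Z ω} + μ.real {ω | r ≤ (-Z) ω} :=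
        (measureReal_mono hsub).trans (measureReal_union_le _ _)
    _ ≤ exp (-2 * r ^ 2 / ∑ i ∈ s, (b i - a i) ^ 2)
        + exp (-2 * r ^ 2 / ∑ i ∈ s, (b i - a i) ^ 2) := by
      rw [← hexp]; exact add_le_add (hZ.measure_ge_le hr) (hZ.neg.measure_ge_le hr)
    _ = 2 * exp (-2 * r ^ 2 / ∑ i ∈ s, (b i - a i) ^ 2) := by ring

theorem measure_abs_weighted_sum_sub_integral_ge_le {Ω ι : Type*} [MeasurableSpace Ω]
    {μ : Measure Ω} [IsProbabilityMeasure μ] {W : ι → Ω → ℝ} (hWm : ∀ j, Measurable (W j))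
    (hW : ∀ j ω, W j ω ∈ Set.Icc 0 1) (hind : iIndepFun W μ) (s : Finset ι) {θ : ι → ℝ}
    (hθ : ∀ j, 0 ≤ θ j) {r : ℝ} (hr : 0 ≤ r) :
    μ {ω | r ≤ |∑ j ∈ s, θ j * W j ω - μ[fun ω ↦ ∑ j ∈ s, θ j * W j ω]|}
      ≤ ENNReal.ofReal (2 * exp (-2 * r ^ 2 / ∑ j ∈ s, θ j ^ 2)) := by
  have hind' : iIndepFun (fun j ω ↦ θ j * W j ω) μ :=
    hind.comp (fun j (x : ℝ) ↦ θ j * x) fun _ ↦ by fun_prop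
  simpa using measure_abs_sum_sub_integral_ge_le (fun j ↦ ((hWm j).const_mul (θ j)).aemeasurable)
    hind' (a := 0) (b := θ) (fun j ↦ ae_of_all _ fun ω ↦
      ⟨mul_nonneg (hθ j) (hW j ω).1, mul_le_of_le_one_right (hθ j) (hW j ω).2⟩) s hr

end Hoeffding

section RunningAverageWeights

variable {δ : ℝ}

theorem one_sub_alphaWt (δ : ℝ) (j : ℕ) : 1 - alphaWt δ j = (j : ℝ) ^ (-δ) := by
  simp [alphaWt]

theorem alphaWt_mem_Icc (hδ : 0 < δ) (i : ℕ) : alphaWt δ i ∈ Set.Icc 0 1 := by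
  have h : (i : ℝ) ^ (-δ) ≤ 1 := by
    rcases Nat.eq_zero_or_pos i with rfl | hi
    · simp [zero_rpow (neg_ne_zero.2 hδ.ne')]
    · exact rpow_le_one_of_one_le_of_nonpos (by exact_mod_cast hi) (by linarith)
  have h' := rpow_nonneg i.cast_nonneg (-δ)
  constructor <;> simp only [alphaWt] <;> linarith

theorem prod_alphaWt_le_exp (hδ : 0 < δ) (j l : ℕ) :
    ∏ i ∈ Icc (j + 1) l, alphaWt δ i ≤ exp (-((l - j : ℕ) * (l : ℝ) ^ (-δ))) :=
  calc ∏ i ∈ Icc (j + 1) l, alphaWt δ i ≤ ∏ i ∈ Icc (j + 1) l, exp (-(l : ℝ) ^ (-δ)) := by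
        refine prod_le_prod (fun i _ ↦ (alphaWt_mem_Icc hδ i).1) fun i hi ↦ ?_
        obtain ⟨hji, hil⟩ := mem_Icc.1 hi
        have hmono : (l : ℝ) ^ (-δ) ≤ (i : ℝ) ^ (-δ) :=
          rpow_le_rpow_of_nonpos (by exact_mod_cast (by omega : 0 < i)) (by exact_mod_cast hil)
            (by linarith)
        linarith [add_one_le_exp (-(l : ℝ) ^ (-δ)), one_sub_alphaWt δ i]
    _ = exp (-((l - j : ℕ) * (l : ℝ) ^ (-δ))) := by
        rw [prod_const, Nat.card_Icc, Nat.add_sub_add_right, ← exp_nat_mul]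
        ring_nf

theorem expansionWeight_alphaWt_le_two_mul_rpow (hδ0 : 0 < δ) (hδ1 : δ < 1) {j l : ℕ}
    (hl : 0 < l) (hjl : l ≤ 2 * j) :
    expansionWeight (alphaWt δ) j l ≤ 2 * (l : ℝ) ^ (-δ) := by
  have hl' : (0 : ℝ) < l / 2 := by positivity
  calc expansionWeight (alphaWt δ) j l ≤ (j : ℝ) ^ (-δ) := by
        rw [← one_sub_alphaWt]; exact expansionWeight_le_one_sub (alphaWt_mem_Icc hδ0) j l
    _ ≤ ((l : ℝ) / 2) ^ (-δ) :=
        rpow_le_rpow_of_nonpos hl' (by rw [div_le_iff₀ two_pos]; exact_mod_cast (by omega))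
          (by linarith)
    _ = (l : ℝ) ^ (-δ) * 2 ^ δ := by
        rw [div_rpow (by positivity) zero_le_two, rpow_neg zero_le_two, div_inv_eq_mul]
    _ ≤ (l : ℝ) ^ (-δ) * 2 ^ (1 : ℝ) := by
        gcongr
        · exact one_le_two
    _ = 2 * (l : ℝ) ^ (-δ) := by rw [rpow_one, mul_comm]

theorem expansionWeight_alphaWt_le_exp (hδ : 0 < δ) {j l : ℕ} (hjl : 2 * j < l) :
    expansionWeight (alphaWt δ) j l ≤ exp (-((l : ℝ) ^ (1 - δ) / 2)) := by
  have hl : (0 : ℝ) < l := by exact_mod_cast (by omega : 0 < l)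
  calc expansionWeight (alphaWt δ) j l ≤ exp (-((l - j : ℕ) * (l : ℝ) ^ (-δ))) :=
        (expansionWeight_le_prod (alphaWt_mem_Icc hδ) j l).trans (prod_alphaWt_le_exp hδ j l)
    _ ≤ exp (-((l : ℝ) / 2 * (l : ℝ) ^ (-δ))) := by
        gcongr
        rw [div_le_iff₀ two_pos]
        exact_mod_cast (by omega : l ≤ (l - j) * 2)
    _ = exp (-((l : ℝ) ^ (1 - δ) / 2)) := by
        rw [sub_eq_add_neg, rpow_add hl, rpow_one]
        ring_nf

theorem eventually_exp_neg_rpow_le_rpow_neg (hδ0 : 0 < δ) (hδ1 : δ < 1) :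
    ∀ᶠ x : ℝ in atTop, exp (-(x ^ (1 - δ) / 2)) ≤ x ^ (-δ) := by
  filter_upwards [(isLittleO_log_rpow_atTop (sub_pos.2 hδ1)).def (by positivity : 0 < 1 / (2 * δ)),
    eventually_gt_atTop 0] with x hlog hx
  rw [norm_eq_abs, norm_eq_abs, abs_of_pos (rpow_pos_of_pos hx _)] at hlog
  have hδlog : δ * log x ≤ x ^ (1 - δ) / 2 := by
    calc δ * log x ≤ δ * (1 / (2 * δ) * x ^ (1 - δ)) :=
          mul_le_mul_of_nonneg_left ((le_abs_self _).trans hlog) hδ0.le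
      _ = x ^ (1 - δ) / 2 := by field_simp
  rw [rpow_def_of_pos hx (-δ), exp_le_exp]
  linarith

theorem eventually_expansionWeight_alphaWt_le (hδ0 : 0 < δ) (hδ1 : δ < 1) :
    ∀ᶠ l : ℕ in atTop, ∀ j, expansionWeight (alphaWt δ) j l ≤ 2 * (l : ℝ) ^ (-δ) := by
  filter_upwards [tendsto_natCast_atTop_atTop.eventually
    (eventually_exp_neg_rpow_le_rpow_neg hδ0 hδ1), eventually_gt_atTop 0] with l hexp hl j
  rcases le_or_gt l (2 * j) with hjl | hjl
  · exact expansionWeight_alphaWt_le_two_mul_rpow hδ0 hδ1 hl hjl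
  · linarith [expansionWeight_alphaWt_le_exp hδ0 hjl, rpow_nonneg l.cast_nonneg (-δ)]

theorem sum_sq_expansionWeight_alphaWt_pos {l : ℕ} (hl : 0 < l) :
    0 < ∑ j ∈ Icc 1 l, expansionWeight (alphaWt δ) j l ^ 2 := by
  refine lt_of_lt_of_le ?_ (single_le_sum (fun j _ ↦ sq_nonneg _) (right_mem_Icc.2 hl))
  rw [expansionWeight_self, one_sub_alphaWt]
  exact pow_pos (rpow_pos_of_pos (by exact_mod_cast hl) _) 2

theorem eventually_sum_sq_expansionWeight_alphaWt_le (hδ0 : 0 < δ) (hδ1 : δ < 1) :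
    ∀ᶠ l : ℕ in atTop, ∑ j ∈ Icc 1 l, expansionWeight (alphaWt δ) j l ^ 2 ≤ 2 * (l : ℝ) ^ (-δ) :=
  (eventually_expansionWeight_alphaWt_le hδ0 hδ1).mono fun l hl ↦
    sum_sq_expansionWeight_le (alphaWt_mem_Icc hδ0) (by positivity) fun j _ ↦ hl j

theorem eventually_rpow_div_log_sq_le_two_div_sum_sq (hδ0 : 0 < δ) (hδ1 : δ < 1) :
    ∀ᶠ l : ℕ in atTop, (l : ℝ) ^ δ / (5 * log l ^ 2)
      ≤ 2 / ∑ j ∈ Icc 1 l, expansionWeight (alphaWt δ) j l ^ 2 := by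
  filter_upwards [eventually_sum_sq_expansionWeight_alphaWt_le hδ0 hδ1, eventually_ge_atTop 3]
    with l hS hl
  have hlog : 1 ≤ log l := by
    have : (3 : ℝ) ≤ l := by exact_mod_cast hl
    rw [le_log_iff_exp_le (by positivity)]
    linarith [exp_one_lt_d9]
  rw [rpow_neg l.cast_nonneg] at hS
  calc (l : ℝ) ^ δ / (5 * log l ^ 2) ≤ (l : ℝ) ^ δ := div_le_self (by positivity) (by nlinarith)
    _ ≤ 2 / ∑ j ∈ Icc 1 l, expansionWeight (alphaWt δ) j l ^ 2 := by
      rw [le_div_iff₀ (sum_sq_expansionWeight_alphaWt_pos (by omega))]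
      calc _ ≤ (l : ℝ) ^ δ * (2 * ((l : ℝ) ^ δ)⁻¹) := by gcongr
        _ = 2 := by field_simp

end RunningAverageWeights

/-- Let `0 < δ < 1` and let `W_1, …, W_l` be independent random variables with
`0 ≤ W_j ≤ 1`. Define `Y_0 = 0`, `Y_i = α_i Y_{i−1} + (1−α_i) W_i`, and `ν_l = E Y_l`.
Then there is a constant `L0` (depending only on `δ`) such that for all `l ≥ L0` and
every `ε > 0`, `P(|Y_l − ν_l| ≥ ε·ν_l) ≤ 2·exp(−ε² ν_l² l^δ/(5(log l)²))`. -/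
theorem running_average_concentration (δ : ℝ) (hδ0 : 0 < δ) (hδ1 : δ < 1) :
    ∃ L0 : ℕ, ∀ (Ω : Type) (_ : MeasureSpace Ω),
      IsProbabilityMeasure (ℙ : Measure Ω) →
      ∀ (W : ℕ → Ω → ℝ), (∀ j, Measurable (W j)) →
      (∀ j, ∀ ω, 0 ≤ W j ω ∧ W j ω ≤ 1) →
      iIndepFun W ℙ →
      ∀ (Y : ℕ → Ω → ℝ), (∀ ω, Y 0 ω = 0) →
      (∀ i : ℕ, 1 ≤ i → ∀ ω,
        Y i ω = alphaWt δ i * Y (i - 1) ω + (1 - alphaWt δ i) * W i ω) →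
      ∀ l : ℕ, L0 ≤ l → ∀ ε : ℝ, 0 < ε →
        ℙ {ω | ε * 𝔼[Y l] ≤ |Y l ω - 𝔼[Y l]|}
          ≤ ENNReal.ofReal
              (2 * Real.exp (-(ε ^ 2 * (𝔼[Y l]) ^ 2 * (l : ℝ) ^ δ
                  / (5 * (Real.log l) ^ 2)))) := by
  obtain ⟨L0, hL0⟩ := eventually_atTop.1 (eventually_rpow_div_log_sq_le_two_div_sum_sq hδ0 hδ1)
  refine ⟨L0, fun Ω _ _ W hWm hW hind Y hY0 hYrec l hl ε hε ↦ ?_⟩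
  set θ := fun j ↦ expansionWeight (alphaWt δ) j l
  have hθ : ∀ j, 0 ≤ θ j := fun j ↦ expansionWeight_nonneg (alphaWt_mem_Icc hδ0) j l
  have hY : ∀ ω, Y l ω = ∑ j ∈ Icc 1 l, θ j * W j ω := fun ω ↦
    eq_sum_expansionWeight_mul (alphaWt δ) (Y := (Y · ω)) (W := (W · ω)) (hY0 ω)
      (fun i ↦ hYrec (i + 1) (by omega) ω) l
  have hν : 0 ≤ 𝔼[Y l] := integral_nonneg fun ω ↦ by
    rw [hY]; exact sum_nonneg fun j _ ↦ mul_nonneg (hθ j) (hW j ω).1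
  have hHoeffding := measure_abs_weighted_sum_sub_integral_ge_le hWm hW hind (Icc 1 l) hθ
    (mul_nonneg hε.le hν)
  simp only [← hY] at hHoeffding
  refine hHoeffding.trans (ENNReal.ofReal_le_ofReal ?_)
  gcongr 2 * exp ?_
  calc -2 * (ε * 𝔼[Y l]) ^ 2 / ∑ j ∈ Icc 1 l, θ j ^ 2
      = -((ε * 𝔼[Y l]) ^ 2 * (2 / ∑ j ∈ Icc 1 l, θ j ^ 2)) := by ring
    _ ≤ -((ε * 𝔼[Y l]) ^ 2 * ((l : ℝ) ^ δ / (5 * log l ^ 2))) :=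
        neg_le_neg (mul_le_mul_of_nonneg_left (hL0 l hl) (sq_nonneg _))
    _ = -(ε ^ 2 * 𝔼[Y l] ^ 2 * l ^ δ / (5 * log l ^ 2)) := by ring
end
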